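/- arXiv:1101.5456 — 8 statements merged into one kernel-verified Lean document; each statement's English description precedes it below -/
import Mathlib

section
/- Let f be a rational map of the Riemann sphere of degree d ≥ 1. Then the Fatou set F(f) is completely invariant under f, i.e. f ⁻¹' F(f) = F(f) and f '' F(f) = F(f); consequently the Julia set J(f) is also completely invariant, i.e. f ⁻¹' J(f) = J(f) and f '' J(f) = J(f). -/
open Polynomial Set Metric Filter MeasureTheory

noncomputable instance : UniformSpace (OnePoint ℂ) := uniformSpaceOfCompactR1

/-- `f` is a rational map of the Riemann sphere `OnePoint ℂ` of degree `d`: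
`f` is continuous and given by `z ↦ P z / Q z` for coprime polynomials `P, Q`,
not both constant, with `Q ≠ 0` and `d = max (natDegree P) (natDegree Q)`. -/
def IsRationalMap (f : OnePoint ℂ → OnePoint ℂ) (d : ℕ) : Prop :=
  Continuous f ∧ ∃ P Q : Polynomial ℂ, IsCoprime P Q ∧
    ¬(P.natDegree = 0 ∧ Q.natDegree = 0) ∧ Q ≠ 0 ∧ d = max P.natDegree Q.natDegree ∧
    ∀ z : ℂ, Q.eval z ≠ 0 → f (z : OnePoint ℂ) = ((P.eval z / Q.eval z : ℂ) : OnePoint ℂ)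

/-- The Fatou set of `f` : the set of points having an open neighbourhood on which the family
of iterates of `f` is equicontinuous (w.r.t. the canonical uniformity of `OnePoint ℂ`). -/
def FatouSet (f : OnePoint ℂ → OnePoint ℂ) : Set (OnePoint ℂ) :=
  {x | ∃ U : Set (OnePoint ℂ), IsOpen U ∧ x ∈ U ∧ EquicontinuousOn (fun n : ℕ => f^[n]) U}

/-- The Julia set of `f` : the complement of the Fatou set. -/
def JuliaSet (f : OnePoint ℂ → OnePoint ℂ) : Set (OnePoint ℂ) :=
  (FatouSet f)ᶜ

/-!
In the charts `z` and `1 / z` of the sphere a rational map with coprime `P`, `Q`, not both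
constant, is locally a quotient of two linearly independent polynomials, hence a nonconstant
holomorphic function, so by the open mapping theorem `f` is an open map. As `f` is also continuous,
it maps the neighbourhoods of `x` onto those of `f x`; since `f^[n + 1] = f^[n] ∘ f`, the iterates
are then equicontinuous at `x` exactly when they are equicontinuous at `f x`, which gives
`f ⁻¹' F(f) = F(f)`. An open continuous self-map of the compact connected sphere is surjective, so
this also gives `f '' F(f) = F(f)`, and the Julia set is the complement.
-/

open OnePoint Topology Bornology

lemma IsOpenMap.surjective_of_continuous {X Y : Type*} [TopologicalSpace X] [TopologicalSpace Y]
    [CompactSpace X] [Nonempty X] [T2Space Y] [PreconnectedSpace Y] {f : X → Y}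
    (hf : IsOpenMap f) (hc : Continuous f) : Function.Surjective f :=
  range_eq_univ.1 <|
    IsClopen.eq_univ ⟨(isCompact_range hc).isClosed, hf.isOpen_range⟩ (range_nonempty f)

lemma Homeomorph.nhds_le_map_comp_iff {X Y Z : Type*} [TopologicalSpace X] [TopologicalSpace Y]
    [TopologicalSpace Z] (h : Y ≃ₜ Z) {F : X → Y} {x : X} :
    𝓝 (h (F x)) ≤ map (h ∘ F) (𝓝 x) ↔ 𝓝 (F x) ≤ map F (𝓝 x) := by
  rw [← h.map_nhds_eq, ← map_map, map_le_map_iff h.injective]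

lemma equicontinuousAt_iterate_apply_iff {X : Type*} [UniformSpace X] {f : X → X} {x : X}
    (hfx : map f (𝓝 x) = 𝓝 (f x)) :
    EquicontinuousAt (fun n => f^[n]) (f x) ↔ EquicontinuousAt (fun n => f^[n]) x := by
  constructor
  · intro h U hU
    have hU' := h U hU
    rw [← hfx, eventually_map] at hU'
    filter_upwards [mem_nhds_left x hU, hU'] with y hxy hfy n
    cases n with
    | zero => exact hxy
    | succ n => simpa only [Function.iterate_succ_apply] using hfy n
  · intro h U hU
    rw [← hfx, eventually_map]
    exact (h U hU).mono fun y hy n => by simpa only [Function.iterate_succ_apply] using hy (n + 1)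

lemma mem_fatouSet_iff {f : OnePoint ℂ → OnePoint ℂ} {x : OnePoint ℂ} :
    x ∈ FatouSet f ↔ ∀ᶠ y in 𝓝 x, EquicontinuousAt (fun n => f^[n]) y := by
  constructor
  · rintro ⟨U, hU, hxU, hfU⟩
    filter_upwards [hU.mem_nhds hxU] with y hy V hV
    simpa only [hU.nhdsWithin_eq hy] using hfU y hy V hV
  · intro h
    exact ⟨_, isOpen_interior, mem_interior_iff_mem_nhds.2 h,
      fun y hy => (interior_subset hy : EquicontinuousAt _ y).equicontinuousWithinAt _⟩

lemma preimage_fatouSet {f : OnePoint ℂ → OnePoint ℂ} (hc : Continuous f) (ho : IsOpenMap f) :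
    f ⁻¹' FatouSet f = FatouSet f := by
  ext x
  rw [mem_preimage, mem_fatouSet_iff, mem_fatouSet_iff, ← ho.map_nhds_eq hc.continuousAt,
    eventually_map]
  simp only [equicontinuousAt_iterate_apply_iff (ho.map_nhds_eq hc.continuousAt)]

namespace OnePoint

lemma tendsto_coe_cobounded {X : Type*} [PseudoMetricSpace X] [ProperSpace X] :
    Tendsto ((↑) : X → OnePoint X) (cobounded X) (𝓝 ∞) := by
  rw [cobounded_eq_cocompact, ← coclosedCompact_eq_cocompact]
  exact tendsto_coe_infty

variable {𝕜 : Type*} [NontriviallyNormedField 𝕜]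

open scoped Classical in
noncomputable def inversion (x : OnePoint 𝕜) : OnePoint 𝕜 :=
  x.elim ((0 : 𝕜) : OnePoint 𝕜) fun z => if z = 0 then ∞ else ((z⁻¹ : 𝕜) : OnePoint 𝕜)

@[simp] lemma inversion_infty : inversion (∞ : OnePoint 𝕜) = ((0 : 𝕜) : OnePoint 𝕜) := rfl

@[simp] lemma inversion_zero : inversion ((0 : 𝕜) : OnePoint 𝕜) = ∞ := by
  simp [inversion]

lemma inversion_coe {z : 𝕜} (hz : z ≠ 0) :
    inversion (z : OnePoint 𝕜) = ((z⁻¹ : 𝕜) : OnePoint 𝕜) := by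
  simp [inversion, hz]

lemma inversion_involutive : Function.Involutive (inversion : OnePoint 𝕜 → OnePoint 𝕜) := by
  intro x
  induction x using OnePoint.rec with
  | infty => simp
  | coe z =>
    rcases eq_or_ne z 0 with rfl | hz
    · simp
    · rw [inversion_coe hz, inversion_coe (inv_ne_zero hz), inv_inv]

variable [ProperSpace 𝕜]

lemma continuous_inversion : Continuous (inversion : OnePoint 𝕜 → OnePoint 𝕜) := by
  rw [OnePoint.continuous_iff]
  refine ⟨?_, continuous_iff_continuousAt.2 fun z => ?_⟩
  · rw [coclosedCompact_eq_cocompact, ← cobounded_eq_cocompact]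
    refine ((continuous_coe.tendsto 0).comp tendsto_inv₀_cobounded).congr' ?_
    filter_upwards [eventually_ne_cobounded 0] with w hw using (inversion_coe hw).symm
  rcases eq_or_ne z 0 with rfl | hz
  · rw [← continuousWithinAt_compl_self, ContinuousWithinAt, inversion_zero]
    refine (tendsto_coe_cobounded.comp tendsto_inv₀_nhdsNE_zero).congr' ?_
    filter_upwards [self_mem_nhdsWithin] with w hw using (inversion_coe hw).symm
  · refine (continuous_coe.continuousAt.comp (continuousAt_inv₀ hz)).congr ?_
    filter_upwards [eventually_ne_nhds hz] with w hw using (inversion_coe hw).symm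

noncomputable def inversionHomeomorph : OnePoint 𝕜 ≃ₜ OnePoint 𝕜 where
  toEquiv := inversion_involutive.toPerm
  continuous_toFun := continuous_inversion
  continuous_invFun := continuous_inversion

@[simp] lemma coe_inversionHomeomorph :
    ⇑(inversionHomeomorph : OnePoint 𝕜 ≃ₜ OnePoint 𝕜) = inversion := rfl

end OnePoint

namespace Polynomial

lemma eventually_eval_ne_zero {K : Type*} [Field K] [TopologicalSpace K] [T1Space K] {p : K[X]}
    (hp : p ≠ 0) (z : K) : ∀ᶠ w in 𝓝[≠] z, p.eval w ≠ 0 :=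
  mem_of_superset (nhdsNE_of_nhdsNE_sdiff_finite univ_mem (p.finite_setOfPred_isRoot hp))
    fun _ hw => hw.2

variable {K : Type*} [Field K]

lemma natDegree_eq_zero_of_isCoprime_of_smul_add_smul_eq_zero {A B : K[X]} {a b : K}
    (hAB : IsCoprime A B) (h : a • A + b • B = 0) (hb : b ≠ 0) :
    A.natDegree = 0 ∧ B.natDegree = 0 := by
  have hB : B = b⁻¹ • -(a • A) := by rw [← eq_neg_of_add_eq_zero_right h, inv_smul_smul₀ hb]
  have hA : IsUnit A := hAB.isUnit_of_dvd' dvd_rfl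
    ⟨-C (b⁻¹ * a), by rw [hB]; simp only [smul_eq_C_mul, C_mul]; ring⟩
  refine ⟨natDegree_eq_zero_of_isUnit hA, Nat.eq_zero_of_le_zero ?_⟩
  calc B.natDegree ≤ (-(a • A)).natDegree := hB ▸ natDegree_smul_le _ _
    _ ≤ A.natDegree := natDegree_neg (a • A) ▸ natDegree_smul_le _ _
    _ = 0 := natDegree_eq_zero_of_isUnit hA

lemma linearIndependent_of_isCoprime {P Q : K[X]} (hPQ : IsCoprime P Q)
    (hdeg : ¬(P.natDegree = 0 ∧ Q.natDegree = 0)) : LinearIndependent K ![P, Q] := by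
  rw [LinearIndependent.pair_iff]
  intro s t hst
  by_contra hst0
  rcases not_and_or.1 hst0 with hs | ht
  · exact hdeg (natDegree_eq_zero_of_isCoprime_of_smul_add_smul_eq_zero hPQ.symm
      (by rwa [add_comm]) hs).symm
  · exact hdeg (natDegree_eq_zero_of_isCoprime_of_smul_add_smul_eq_zero hPQ hst ht)

lemma LinearIndependent.pair_reflect {P Q : K[X]} (hPQ : LinearIndependent K ![P, Q]) (N : ℕ) :
    LinearIndependent K ![reflect N P, reflect N Q] := by
  rw [LinearIndependent.pair_iff] at hPQ ⊢
  intro s t hst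
  refine hPQ s t ((reflect_eq_zero_iff (N := N)).1 ?_)
  simpa only [smul_eq_C_mul, reflect_add, reflect_C_mul] using hst

lemma eval_reflect {p : K[X]} {N : ℕ} (hp : p.natDegree ≤ N) {w : K} (hw : w ≠ 0) :
    (reflect N p).eval w = p.eval w⁻¹ * w ^ N := by
  let := invertibleOfNonzero (inv_ne_zero hw)
  have h := eval₂_reflect_mul_pow (RingHom.id K) w⁻¹ N p hp
  rw [invOf_eq_inv, inv_inv, ← eval, ← eval] at h
  rw [← h, mul_assoc, ← mul_pow, inv_mul_cancel₀ hw, one_pow, mul_one]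

lemma eval_zero_reflect (N : ℕ) (p : K[X]) : (reflect N p).eval 0 = p.coeff N := by
  rw [← coeff_zero_eq_eval_zero, coeff_reflect, revAt_zero]

lemma not_eventually_eval_div_eq {𝕜 : Type*} [NontriviallyNormedField 𝕜] {A B : 𝕜[X]}
    (hAB : LinearIndependent 𝕜 ![A, B]) (z c : 𝕜) :
    ¬∀ᶠ w in 𝓝 z, A.eval w / B.eval w = c := by
  intro h
  have hB : B ≠ 0 := by simpa using hAB.ne_zero 1
  have hAcB : A - C c * B ≠ 0 := fun h0 => one_ne_zero <|
    (LinearIndependent.pair_iff.1 hAB 1 (-c) (by simpa [smul_eq_C_mul, sub_eq_add_neg] using h0)).1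
  obtain ⟨w, hw, hBw, hAcBw⟩ := ((h.filter_mono nhdsWithin_le_nhds).and
    ((eventually_eval_ne_zero hB z).and (eventually_eval_ne_zero hAcB z))).exists
  apply hAcBw
  rw [eval_sub, eval_mul, eval_C, ← hw, div_mul_cancel₀ _ hBw, sub_self]

end Polynomial

/-- Agreement is only required off `z`: the value `F z` (`∞` at a pole, say) is forced by
continuity. -/
lemma nhds_le_map_of_eventuallyEq_analytic {F : OnePoint ℂ → OnePoint ℂ} (hF : Continuous F)
    {g : ℂ → ℂ} {z : ℂ} (hg : AnalyticAt ℂ g z) (hgc : ¬∀ᶠ w in 𝓝 z, g w = g z)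
    (hFg : ∀ᶠ w : ℂ in 𝓝[≠] z, F w = g w) : 𝓝 (F z) ≤ map F (𝓝 (z : OnePoint ℂ)) := by
  have hFz : F z = g z := tendsto_nhds_unique
    (((hF.tendsto _).comp (continuous_coe.tendsto z)).mono_left nhdsWithin_le_nhds)
    ((((continuous_coe.tendsto _).comp hg.continuousAt).mono_left nhdsWithin_le_nhds).congr'
      (hFg.mono fun w hw => hw.symm))
  have hFg' : F ∘ (↑) =ᶠ[𝓝 z] (↑) ∘ g := by
    rw [← nhdsNE_sup_pure, EventuallyEq, eventually_sup, eventually_pure]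
    exact ⟨hFg, hFz⟩
  calc 𝓝 (F z) = map (↑) (𝓝 (g z)) := by rw [hFz, nhds_coe_eq]
    _ ≤ map (↑) (map g (𝓝 z)) :=
      map_mono (hg.eventually_constant_or_nhds_le_map_nhds.resolve_left hgc)
    _ = map F (𝓝 (z : OnePoint ℂ)) := by rw [map_map, ← map_congr hFg', nhds_coe_eq, map_map]

lemma nhds_le_map_of_eventuallyEq_div_of_eval_ne_zero {F : OnePoint ℂ → OnePoint ℂ}
    (hF : Continuous F) {A B : ℂ[X]} (hAB : LinearIndependent ℂ ![A, B]) {z : ℂ}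
    (hBz : B.eval z ≠ 0)
    (hF_eq : ∀ᶠ w : ℂ in 𝓝[≠] z, F w = ((A.eval w / B.eval w : ℂ) : OnePoint ℂ)) :
    𝓝 (F z) ≤ map F (𝓝 (z : OnePoint ℂ)) :=
  nhds_le_map_of_eventuallyEq_analytic hF
    ((AnalyticOnNhd.eval_polynomial A z trivial).div
      (AnalyticOnNhd.eval_polynomial B z trivial) hBz)
    (not_eventually_eval_div_eq hAB z _) hF_eq

lemma nhds_le_map_of_eventuallyEq_div {F : OnePoint ℂ → OnePoint ℂ}
    (hF : Continuous F) {A B : ℂ[X]} (hAB : LinearIndependent ℂ ![A, B]) {z : ℂ}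
    (hz : A.eval z ≠ 0 ∨ B.eval z ≠ 0)
    (hF_eq : ∀ᶠ w : ℂ in 𝓝[≠] z, F w = ((A.eval w / B.eval w : ℂ) : OnePoint ℂ)) :
    𝓝 (F z) ≤ map F (𝓝 (z : OnePoint ℂ)) := by
  rcases hz with hAz | hBz
  · rw [← inversionHomeomorph.nhds_le_map_comp_iff]
    refine nhds_le_map_of_eventuallyEq_div_of_eval_ne_zero
      (inversionHomeomorph.continuous.comp hF) (LinearIndependent.pair_symm_iff.1 hAB) hAz ?_
    have hB : B ≠ 0 := by simpa using hAB.ne_zero 1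
    filter_upwards [hF_eq, eventually_eval_ne_zero hB z,
      (A.continuousAt.eventually_ne hAz).filter_mono nhdsWithin_le_nhds] with w hw hBw hAw
    simp [hw, inversion_coe (div_ne_zero hAw hBw), inv_div]
  · exact nhds_le_map_of_eventuallyEq_div_of_eval_ne_zero hF hAB hBz hF_eq

lemma nhds_le_map_infty_of_eq_div {F : OnePoint ℂ → OnePoint ℂ} (hF : Continuous F)
    {P Q : ℂ[X]} (hPQ : LinearIndependent ℂ ![P, Q])
    (hF_eq : ∀ z : ℂ, Q.eval z ≠ 0 → F z = ((P.eval z / Q.eval z : ℂ) : OnePoint ℂ)) :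
    𝓝 (F ∞) ≤ map F (𝓝 ∞) := by
  set N := max P.natDegree Q.natDegree
  have hPN : P.natDegree ≤ N := le_max_left _ _
  have hQN : Q.natDegree ≤ N := le_max_right _ _
  have hP : P ≠ 0 := by simpa using hPQ.ne_zero 0
  have hQ : Q ≠ 0 := by simpa using hPQ.ne_zero 1
  have hlead : (reflect N P).eval 0 ≠ 0 ∨ (reflect N Q).eval 0 ≠ 0 := by
    simp only [eval_zero_reflect]
    rcases max_choice P.natDegree Q.natDegree with h | h
    · exact Or.inl (by rw [show N = _ from h, coeff_natDegree]; exact leadingCoeff_ne_zero.2 hP)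
    · exact Or.inr (by rw [show N = _ from h, coeff_natDegree]; exact leadingCoeff_ne_zero.2 hQ)
  -- in the chart `w ↦ 1 / w` at `∞`, `F` becomes `reflect N P / reflect N Q`
  have h := nhds_le_map_of_eventuallyEq_div (hF.comp continuous_inversion) (hPQ.pair_reflect N)
    hlead ?_
  · rwa [Function.comp_apply, inversion_zero, ← Filter.map_map, ← coe_inversionHomeomorph,
      inversionHomeomorph.map_nhds_eq, coe_inversionHomeomorph, inversion_zero] at h
  filter_upwards [self_mem_nhdsWithin, eventually_eval_ne_zero (reflect_eq_zero_iff.not.2 hQ) 0]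
    with w (hw : w ≠ 0) hQw
  rw [eval_reflect hQN hw] at hQw
  rw [Function.comp_apply, inversion_coe hw, hF_eq _ (left_ne_zero_of_mul hQw),
    eval_reflect hPN hw, eval_reflect hQN hw, mul_div_mul_right _ _ (pow_ne_zero N hw)]

theorem IsRationalMap.isOpenMap {f : OnePoint ℂ → OnePoint ℂ} {d : ℕ} (hf : IsRationalMap f d) :
    IsOpenMap f := by
  obtain ⟨hc, P, Q, hPQ, hdeg, hQ, -, hf_eq⟩ := hf
  have hli := linearIndependent_of_isCoprime hPQ hdeg
  refine isOpenMap_iff_nhds_le.2 fun x => ?_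
  induction x using OnePoint.rec with
  | infty => exact nhds_le_map_infty_of_eq_div hc hli hf_eq
  | coe z =>
    refine nhds_le_map_of_eventuallyEq_div hc hli ?_ ?_
    · simpa using aeval_ne_zero_of_isCoprime hPQ z
    · filter_upwards [eventually_eval_ne_zero hQ z] with w hw using hf_eq w hw

theorem fatou_julia_completely_invariant_general
    (f : OnePoint ℂ → OnePoint ℂ) (d : ℕ) (hf : IsRationalMap f d) :
    f ⁻¹' FatouSet f = FatouSet f ∧ f '' FatouSet f = FatouSet f ∧
      f ⁻¹' JuliaSet f = JuliaSet f ∧ f '' JuliaSet f = JuliaSet f := by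
  have hopen := hf.isOpenMap
  have hsurj := hopen.surjective_of_continuous hf.1
  have hF := preimage_fatouSet hf.1 hopen
  have hJ : f ⁻¹' JuliaSet f = JuliaSet f := by rw [JuliaSet, preimage_compl, hF]
  have himage : ∀ s, f ⁻¹' s = s → f '' s = s := fun s hs => by
    nth_rewrite 1 [← hs]
    exact hsurj.image_preimage s
  exact ⟨hF, himage _ hF, hJ, himage _ hJ⟩

theorem fatou_julia_completely_invariant
    (f : OnePoint ℂ → OnePoint ℂ) (d : ℕ) (hd : 1 ≤ d) (hf : IsRationalMap f d) :
    f ⁻¹' FatouSet f = FatouSet f ∧ f '' FatouSet f = FatouSet f ∧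
      f ⁻¹' JuliaSet f = JuliaSet f ∧ f '' JuliaSet f = JuliaSet f :=
  fatou_julia_completely_invariant_general f d hf
end

section
/- Let f be a rational map of the Riemann sphere of degree d ≥ 1 determined by coprime polynomials P, Q, and let z₀ ∈ ℂ satisfy eval z₀ Q ≠ 0 and R z₀ = z₀, where R z = eval z P / eval z Q. If |deriv R z₀| < 1 (z₀ is an attracting or superattracting fixed point), then ↑z₀ belongs to the Fatou set F(f). -/
open Polynomial Set Metric Filter MeasureTheory

/-!
Since `|R'(z₀)| < 1`, the rational function `R` is `1`-Lipschitz on a small closed disc around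
the fixed point `z₀`, hence maps that disc into itself, and all its iterates are `1`-Lipschitz
there. On the disc `f` is `R`, and the inclusion of the compact disc into the sphere is uniformly
continuous, so the iterates of `f` are equicontinuous on the interior of the disc.
-/

open Topology

theorem HasStrictDerivAt.exists_lipschitzOnWith_of_nnnorm_lt {𝕜 F : Type*} [RCLike 𝕜]
    [NormedAddCommGroup F] [NormedSpace 𝕜 F] {f : 𝕜 → F} {f' : F} {x : 𝕜}
    (hf : HasStrictDerivAt f f' x) (K : NNReal) (hK : ‖f'‖₊ < K) :
    ∃ s ∈ 𝓝 x, LipschitzOnWith K f s :=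
  HasStrictFDerivAt.exists_lipschitzOnWith_of_nnnorm_lt hf K (by simpa using hK)

theorem Polynomial.hasStrictDerivAt_eval_div_eval {𝕜 : Type*} [NontriviallyNormedField 𝕜]
    (P Q : 𝕜[X]) {x : 𝕜} (hx : Q.eval x ≠ 0) :
    HasStrictDerivAt (fun z => P.eval z / Q.eval z)
      ((P.derivative.eval x * Q.eval x - P.eval x * Q.derivative.eval x) / Q.eval x ^ 2) x :=
  (P.hasStrictDerivAt x).fun_div (Q.hasStrictDerivAt x) hx

theorem LipschitzOnWith.iterate {α : Type*} [PseudoEMetricSpace α] {f : α → α} {K : NNReal}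
    {s : Set α} (hf : LipschitzOnWith K f s) (hs : MapsTo f s s) :
    ∀ n : ℕ, LipschitzOnWith (K ^ n) f^[n] s
  | 0 => by simpa using LipschitzWith.id.lipschitzOnWith
  | n + 1 => by
    rw [pow_succ, Function.iterate_succ]
    exact (hf.iterate hs n).comp hf hs

theorem LipschitzOnWith.uniformEquicontinuousOn_iterate {α : Type*} [PseudoEMetricSpace α]
    {f : α → α} {s : Set α} (hf : LipschitzOnWith 1 f s) (hs : MapsTo f s s) :
    UniformEquicontinuousOn (fun n : ℕ => f^[n]) s :=
  LipschitzOnWith.uniformEquicontinuousOn _ 1 fun n => by simpa using hf.iterate hs n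

theorem LipschitzOnWith.mapsTo_closedBall {α : Type*} [PseudoMetricSpace α] {f : α → α}
    {x : α} {r : ℝ} (hf : LipschitzOnWith 1 f (closedBall x r)) (hx : f x = x) :
    MapsTo f (closedBall x r) (closedBall x r) := fun y hy => by
  have := hf.dist_le_mul y hy x (mem_closedBall_self (nonempty_closedBall.mp ⟨y, hy⟩))
  rw [hx, NNReal.coe_one, one_mul] at this
  exact this.trans hy

theorem Set.EqOn.iterate_comp {α β : Type*} {f : β → β} {g : α → α} {e : α → β} {s : Set α}
    (h : EqOn (f ∘ e) (e ∘ g) s) (hg : MapsTo g s s) :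
    ∀ n : ℕ, EqOn (f^[n] ∘ e) (e ∘ g^[n]) s
  | 0 => fun _ _ => rfl
  | n + 1 => fun x hx => by
    simp only [Function.comp_apply, Function.iterate_succ_apply]
    rw [show f (e x) = e (g x) from h hx]
    exact h.iterate_comp hg n (hg hx)

theorem UniformContinuousOn.comp_uniformEquicontinuousOn {ι α β γ : Type*} [UniformSpace α]
    [UniformSpace β] [UniformSpace γ] {φ : α → γ} {K : Set α} (hφ : UniformContinuousOn φ K)
    {F : ι → β → α} {S : Set β} (hF : UniformEquicontinuousOn F S)
    (hFK : ∀ i, MapsTo (F i) S K) : UniformEquicontinuousOn (fun i => φ ∘ F i) S := by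
  intro V hV
  filter_upwards [hF _ (mem_inf_principal.mp (hφ hV)), mem_inf_of_right (mem_principal_self _)]
    with p hpV hpS i
  exact hpV i (mk_mem_prod (hFK i (mem_prod.mp hpS).1) (hFK i (mem_prod.mp hpS).2))

theorem Topology.IsInducing.equicontinuousOn_image {ι X Y α : Type*} [TopologicalSpace X]
    [TopologicalSpace Y] [UniformSpace α] {e : X → Y} (he : IsInducing e) {F : ι → Y → α}
    {G : ι → X → α} {s : Set X} (hFG : ∀ i, EqOn (F i ∘ e) (G i) s)
    (hG : EquicontinuousOn G s) : EquicontinuousOn F (e '' s) := by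
  rintro _ ⟨x, hx, rfl⟩ U hU
  rw [← he.map_nhdsWithin_eq, eventually_map]
  filter_upwards [hG x hx U hU, self_mem_nhdsWithin] with y hyU hy i
  rw [← Function.comp_apply (f := F i), ← Function.comp_apply (f := F i) (g := e),
    hFG i hx, hFG i hy]
  exact hyU i

theorem mem_fatouSet_of_uniformEquicontinuousOn_iterate {f : OnePoint ℂ → OnePoint ℂ}
    {R : ℂ → ℂ} {K : Set ℂ} {z : ℂ} (hK : IsCompact K) (hz : K ∈ 𝓝 z) (hRK : MapsTo R K K)
    (hfR : EqOn (f ∘ (↑)) ((↑) ∘ R) K) (hR : UniformEquicontinuousOn (fun n : ℕ => R^[n]) K) :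
    (z : OnePoint ℂ) ∈ FatouSet f := by
  have hcoe : UniformContinuousOn ((↑) : ℂ → OnePoint ℂ) K :=
    hK.uniformContinuousOn_of_continuous OnePoint.continuous_coe.continuousOn
  have hcoeR : EquicontinuousOn (fun n : ℕ => ((↑) : ℂ → OnePoint ℂ) ∘ R^[n]) (interior K) :=
    (hcoe.comp_uniformEquicontinuousOn hR hRK.iterate).equicontinuousOn.mono interior_subset
  refine ⟨(↑) '' interior K, OnePoint.isOpenEmbedding_coe.isOpenMap _ isOpen_interior,
    mem_image_of_mem _ (mem_interior_iff_mem_nhds.mpr hz), ?_⟩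
  exact OnePoint.isOpenEmbedding_coe.isInducing.equicontinuousOn_image
    (fun n => (hfR.iterate_comp hRK n).mono interior_subset) hcoeR

theorem attracting_fixedPoint_mem_fatouSet_general
    (f : OnePoint ℂ → OnePoint ℂ)
    (P Q : Polynomial ℂ)
    (hfPQ : ∀ z : ℂ, Q.eval z ≠ 0 → f (z : OnePoint ℂ) = ((P.eval z / Q.eval z : ℂ) : OnePoint ℂ))
    (R : ℂ → ℂ) (hR : ∀ z : ℂ, R z = P.eval z / Q.eval z)
    (z₀ : ℂ) (hz₀ : Q.eval z₀ ≠ 0) (hfix : R z₀ = z₀)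
    (hattr : ‖deriv R z₀‖ < 1) :
    (z₀ : OnePoint ℂ) ∈ FatouSet f := by
  have hstrict : HasStrictDerivAt R (deriv R z₀) z₀ := by
    have h := funext hR ▸ P.hasStrictDerivAt_eval_div_eval Q hz₀
    rwa [h.hasDerivAt.deriv]
  obtain ⟨s, hs, hlip⟩ := hstrict.exists_lipschitzOnWith_of_nnnorm_lt 1 (by exact_mod_cast hattr)
  obtain ⟨r, hr, hrs⟩ := nhds_basis_closedBall.mem_iff.mp
    (inter_mem hs (Q.continuous.continuousAt.eventually_ne hz₀))
  have hlipK : LipschitzOnWith 1 R (closedBall z₀ r) := hlip.mono (hrs.trans inter_subset_left)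
  have hmaps := hlipK.mapsTo_closedBall hfix
  refine mem_fatouSet_of_uniformEquicontinuousOn_iterate (isCompact_closedBall z₀ r)
    (closedBall_mem_nhds z₀ hr) hmaps (fun z hz => ?_)
    (hlipK.uniformEquicontinuousOn_iterate hmaps)
  rw [Function.comp_apply, Function.comp_apply, hfPQ z (hrs hz).2, hR]

theorem attracting_fixedPoint_mem_fatouSet
    (f : OnePoint ℂ → OnePoint ℂ) (d : ℕ) (hd : 1 ≤ d)
    (P Q : Polynomial ℂ) (hf : Continuous f) (hPQ : IsCoprime P Q)
    (hne : ¬(P.natDegree = 0 ∧ Q.natDegree = 0)) (hQ : Q ≠ 0)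
    (hdeg : d = max P.natDegree Q.natDegree)
    (hfPQ : ∀ z : ℂ, Q.eval z ≠ 0 → f (z : OnePoint ℂ) = ((P.eval z / Q.eval z : ℂ) : OnePoint ℂ))
    (R : ℂ → ℂ) (hR : ∀ z : ℂ, R z = P.eval z / Q.eval z)
    (z₀ : ℂ) (hz₀ : Q.eval z₀ ≠ 0) (hfix : R z₀ = z₀)
    (hattr : ‖deriv R z₀‖ < 1) :
    (z₀ : OnePoint ℂ) ∈ FatouSet f :=
  attracting_fixedPoint_mem_fatouSet_general f P Q hfPQ R hR z₀ hz₀ hfix hattr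
end

section
/- Let f be a rational map of the Riemann sphere of degree d ≥ 1 determined by coprime polynomials P, Q, and let z₀ ∈ ℂ satisfy eval z₀ Q ≠ 0 and R z₀ = z₀, where R z = eval z P / eval z Q. If |deriv R z₀| > 1 (z₀ is a repelling fixed point), then ↑z₀ belongs to the Julia set J(f). -/
open Polynomial Set Metric Filter MeasureTheory

/-! Near the repelling fixed point `z₀` the map `R` expands distances to `z₀` by a factor `μ > 1`,
so the `R`-orbit of every `y ≠ z₀` close to `z₀` leaves a fixed ball around `z₀`; on that ball `f`
agrees with `R`. If `f` were equicontinuous near `z₀`, the `f`-orbits of all points close enough to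
the fixed point `z₀` would stay in that ball. -/

open Topology Function

section Equicontinuity

variable {ι X α : Type*} [TopologicalSpace X] [UniformSpace α] {F : ι → X → α} {x₀ : X}

lemma EquicontinuousWithinAt.equicontinuousAt_of_mem_nhds {S : Set X}
    (h : EquicontinuousWithinAt F S x₀) (hS : S ∈ 𝓝 x₀) : EquicontinuousAt F x₀ := by
  intro V hV
  simpa only [nhdsWithin_eq_nhds.2 hS] using h V hV

lemma EquicontinuousAt.eventually_forall_mem {a : α} {W : Set α} (h : EquicontinuousAt F x₀)
    (hF : ∀ i, F i x₀ = a) (hW : W ∈ 𝓝 a) : ∀ᶠ x in 𝓝 x₀, ∀ i, F i x ∈ W := by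
  obtain ⟨V, hV, hVW⟩ := UniformSpace.mem_nhds_iff.1 hW
  filter_upwards [h V hV] with x hx i
  exact hVW (by rw [← hF i]; exact hx i)

end Equicontinuity

lemma HasDerivAt.eventually_mul_dist_le {𝕜 F : Type*} [NontriviallyNormedField 𝕜]
    [NormedAddCommGroup F] [NormedSpace 𝕜 F] {g : 𝕜 → F} {c : F} {x : 𝕜} {μ : ℝ}
    (hg : HasDerivAt g c x) (hμ : μ < ‖c‖) : ∀ᶠ z in 𝓝 x, μ * dist z x ≤ dist (g z) (g x) := by
  have hε : 0 < ‖c‖ - μ := sub_pos.2 hμ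
  filter_upwards [(hasDerivAt_iff_isLittleO.1 hg).def hε] with z hz
  rw [dist_eq_norm, dist_eq_norm]
  calc μ * ‖z - x‖ = ‖(z - x) • c‖ - (‖c‖ - μ) * ‖z - x‖ := by rw [norm_smul]; ring
    _ ≤ ‖(z - x) • c‖ - ‖g z - g x - (z - x) • c‖ := by gcongr
    _ ≤ ‖g z - g x‖ := by
      have := norm_sub_norm_le ((z - x) • c) ((z - x) • c - (g z - g x))
      rwa [sub_sub_cancel, norm_sub_rev] at this

lemma Metric.exists_iterate_notMem_ball {X : Type*} [PseudoMetricSpace X] {g : X → X} {x₀ y : X}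
    {μ r : ℝ} (hμ : 1 < μ) (hg : ∀ z ∈ ball x₀ r, μ * dist z x₀ ≤ dist (g z) x₀)
    (hy : 0 < dist y x₀) : ∃ n, g^[n] y ∉ ball x₀ r := by
  by_contra! hstay
  have hgrow : ∀ n, μ ^ n * dist y x₀ ≤ dist (g^[n] y) x₀ := by
    intro n
    induction n with
    | zero => simp
    | succ n ih =>
      rw [iterate_succ_apply', pow_succ', mul_assoc]
      exact (mul_le_mul_of_nonneg_left ih (by positivity)).trans (hg _ (hstay n))
  obtain ⟨n, hn⟩ := pow_unbounded_of_one_lt (r / dist y x₀) hμ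
  have := (hgrow n).trans_lt (mem_ball.1 (hstay n))
  rw [div_lt_iff₀ hy] at hn
  linarith

lemma iterate_apply_eq_of_forall_iterate_mem_image {α β : Type*} {f : β → β} {g : α → β}
    {R : α → α} {S : Set α} (hg : Injective g) (hfR : ∀ z ∈ S, f (g z) = g (R z)) {y : α}
    (hy : ∀ n, f^[n] (g y) ∈ g '' S) (n : ℕ) : R^[n] y ∈ S ∧ f^[n] (g y) = g (R^[n] y) := by
  have heq : f^[n] (g y) = g (R^[n] y) := by
    induction n with
    | zero => rfl
    | succ n ih =>
      have hmem : R^[n] y ∈ S := hg.mem_set_image.1 (ih ▸ hy n)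
      rw [iterate_succ_apply', iterate_succ_apply', ih, hfR _ hmem]
  exact ⟨hg.mem_set_image.1 (heq ▸ hy n), heq⟩

theorem repelling_fixedPoint_mem_juliaSet_general
    (f : OnePoint ℂ → OnePoint ℂ)
    (P Q : Polynomial ℂ)
    (hfPQ : ∀ z : ℂ, Q.eval z ≠ 0 → f (z : OnePoint ℂ) = ((P.eval z / Q.eval z : ℂ) : OnePoint ℂ))
    (R : ℂ → ℂ) (hR : ∀ z : ℂ, R z = P.eval z / Q.eval z)
    (z₀ : ℂ) (hz₀ : Q.eval z₀ ≠ 0) (hfix : R z₀ = z₀)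
    (hrep : 1 < ‖deriv R z₀‖) :
    (z₀ : OnePoint ℂ) ∈ JuliaSet f := by
  rintro ⟨U, hU, hz₀U, hequi⟩
  have hfR : ∀ z, Q.eval z ≠ 0 → f z = R z := fun z hz => by rw [hfPQ z hz, hR]
  have hRdiff : DifferentiableAt ℂ R z₀ := by
    rw [funext hR]
    exact P.differentiableAt.div Q.differentiableAt hz₀
  obtain ⟨μ, hμ, hμR⟩ := exists_between hrep
  have hgood : ∀ᶠ z in 𝓝 z₀, Q.eval z ≠ 0 ∧ μ * dist z z₀ ≤ dist (R z) z₀ := by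
    refine (Q.continuous.continuousAt.eventually_ne hz₀).and ?_
    simpa only [hfix] using hRdiff.hasDerivAt.eventually_mul_dist_le hμR
  obtain ⟨r, hr, hball⟩ := Metric.eventually_nhds_iff_ball.1 hgood
  have hnhds : ((↑) '' ball z₀ r : Set (OnePoint ℂ)) ∈ 𝓝 (z₀ : OnePoint ℂ) :=
    (OnePoint.isOpenEmbedding_coe.isOpenMap _ isOpen_ball).mem_nhds ⟨z₀, mem_ball_self hr, rfl⟩
  have hstay : ∀ᶠ y : ℂ in 𝓝 z₀, ∀ n, f^[n] y ∈ ((↑) '' ball z₀ r : Set (OnePoint ℂ)) :=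
    OnePoint.continuous_coe.continuousAt.eventually <|
      ((hequi _ hz₀U).equicontinuousAt_of_mem_nhds (hU.mem_nhds hz₀U)).eventually_forall_mem
        (iterate_fixed (by rw [hfR z₀ hz₀, hfix])) hnhds
  obtain ⟨y, hy, hyz₀⟩ :=
    ((hstay.filter_mono nhdsWithin_le_nhds).and (eventually_mem_nhdsWithin (s := {z₀}ᶜ))).exists
  have horbit := iterate_apply_eq_of_forall_iterate_mem_image OnePoint.coe_injective
    (fun z hz => hfR z (hball z hz).1) hy
  obtain ⟨n, hn⟩ := exists_iterate_notMem_ball hμ (fun z hz => (hball z hz).2) (dist_pos.2 hyz₀)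
  exact hn (horbit n).1

theorem repelling_fixedPoint_mem_juliaSet
    (f : OnePoint ℂ → OnePoint ℂ) (d : ℕ) (hd : 1 ≤ d)
    (P Q : Polynomial ℂ) (hf : Continuous f) (hPQ : IsCoprime P Q)
    (hne : ¬(P.natDegree = 0 ∧ Q.natDegree = 0)) (hQ : Q ≠ 0)
    (hdeg : d = max P.natDegree Q.natDegree)
    (hfPQ : ∀ z : ℂ, Q.eval z ≠ 0 → f (z : OnePoint ℂ) = ((P.eval z / Q.eval z : ℂ) : OnePoint ℂ))
    (R : ℂ → ℂ) (hR : ∀ z : ℂ, R z = P.eval z / Q.eval z)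
    (z₀ : ℂ) (hz₀ : Q.eval z₀ ≠ 0) (hfix : R z₀ = z₀)
    (hrep : 1 < ‖deriv R z₀‖) :
    (z₀ : OnePoint ℂ) ∈ JuliaSet f :=
  repelling_fixedPoint_mem_juliaSet_general f P Q hfPQ R hR z₀ hz₀ hfix hrep
end

section
/- (Koenigs linearization) Let f : ℂ → ℂ be analytic at z₀ with f z₀ = z₀ and a := deriv f z₀ satisfying 0 < |a| < 1. Then there exist r > 0 and a function g : ℂ → ℂ analytic on the open ball B(z₀, r) such that f maps B(z₀, r) into itself, g z₀ = 0, deriv g z₀ = 1, g is injective on B(z₀, r), and g (f z) = a * g z for every z ∈ B(z₀, r). -/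
/-!
Near the attracting fixed point, `f z - z₀ = a (z - z₀) + O(|z - z₀|²)`, and on a small ball
`|f z - z₀| ≤ c |z - z₀|` for some `c` with `|a| < c` and `c² < |a|`. The normalized iterates
`(fⁿ z - z₀) / aⁿ` therefore differ from one step to the next by `O((c² / |a|)ⁿ)` uniformly on the
ball, so they converge uniformly to a holomorphic `g`. The relation `g ∘ f = a g` passes to the
limit from the identical relation between consecutive normalized iterates, and `g' z₀ = 1` because
every normalized iterate has derivative `1` at `z₀`; the inverse function theorem then makes `g`
injective near `z₀`.
-/

open Set Metric Filter Topology

section LocalBounds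

variable {𝕜 E : Type*} [NontriviallyNormedField 𝕜] [NormedAddCommGroup E] [NormedSpace 𝕜 E]

theorem AnalyticAt.exists_eventually_norm_sub_sub_smul_deriv_le {f : 𝕜 → E} {x : 𝕜}
    (hf : AnalyticAt 𝕜 f x) :
    ∃ M ≥ 0, ∀ᶠ y in 𝓝 x, ‖f y - f x - (y - x) • deriv f x‖ ≤ M * ‖y - x‖ ^ 2 := by
  obtain ⟨p, hp⟩ := hf
  obtain ⟨M, hM, hO⟩ := (hp.isBigO_sub_partialSum_pow 2).exists_nonneg
  have hpartial : ∀ y, p.partialSum 2 y = f x + y • deriv f x := by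
    intro y
    simp [FormalMultilinearSeries.partialSum, Finset.sum_range_succ, hp.deriv, ← hp.coeff_zero 1]
  refine ⟨M, hM, ?_⟩
  have hshift : Tendsto (fun y => y - x) (𝓝 x) (𝓝 0) := tendsto_sub_nhds_zero_iff.2 tendsto_id
  filter_upwards [hshift.eventually hO.bound] with y hy
  simpa [hpartial, sub_sub] using hy

theorem HasDerivAt.eventually_dist_le_mul {f : 𝕜 → E} {f' : E} {x : 𝕜} (hf : HasDerivAt f f' x)
    {c : ℝ} (hc : ‖f'‖ < c) : ∀ᶠ y in 𝓝 x, dist (f y) (f x) ≤ c * dist y x := by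
  filter_upwards [(hasDerivAt_iff_isLittleO.1 hf).def (sub_pos.2 hc)] with y hy
  rw [dist_eq_norm, dist_eq_norm]
  calc ‖f y - f x‖ ≤ ‖f y - f x - (y - x) • f'‖ + ‖(y - x) • f'‖ := norm_le_norm_sub_add _ _
    _ ≤ (c - ‖f'‖) * ‖y - x‖ + ‖y - x‖ * ‖f'‖ := by rw [norm_smul]; gcongr
    _ = c * ‖y - x‖ := by ring

end LocalBounds

theorem HasStrictDerivAt.exists_injOn_ball {𝕜 : Type*} [NontriviallyNormedField 𝕜]
    [CompleteSpace 𝕜] {f : 𝕜 → 𝕜} {f' x : 𝕜} (hf : HasStrictDerivAt f f' x) (hf' : f' ≠ 0) :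
    ∃ ε > 0, InjOn f (ball x ε) := by
  obtain ⟨ε, hε, hinv⟩ := eventually_nhds_iff_ball.1 (hf.eventually_left_inverse hf')
  exact ⟨ε, hε, LeftInvOn.injOn hinv⟩

section Contraction

variable {X : Type*} [PseudoMetricSpace X] {f : X → X} {x₀ : X} {r c : ℝ}

theorem mapsTo_ball_of_dist_le_mul (hc : c ≤ 1)
    (hf : ∀ x ∈ ball x₀ r, dist (f x) x₀ ≤ c * dist x x₀) : MapsTo f (ball x₀ r) (ball x₀ r) :=
  fun x hx => (hf x hx).trans_lt <| (mul_le_of_le_one_left dist_nonneg hc).trans_lt hx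

theorem dist_iterate_le_of_dist_le_mul (hc₀ : 0 ≤ c) (hc₁ : c ≤ 1)
    (hf : ∀ x ∈ ball x₀ r, dist (f x) x₀ ≤ c * dist x x₀) {x : X} (hx : x ∈ ball x₀ r) (n : ℕ) :
    dist (f^[n] x) x₀ ≤ c ^ n * dist x x₀ := by
  induction n with
  | zero => simp
  | succ n ih =>
    rw [Function.iterate_succ_apply']
    calc dist (f (f^[n] x)) x₀ ≤ c * dist (f^[n] x) x₀ :=
          hf _ ((mapsTo_ball_of_dist_le_mul hc₁ hf).iterate n hx)
      _ ≤ c * (c ^ n * dist x x₀) := by gcongr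
      _ = c ^ (n + 1) * dist x x₀ := by ring

end Contraction

theorem tendstoUniformlyOn_limUnder_of_norm_sub_le {α E : Type*} [NormedAddCommGroup E]
    [CompleteSpace E] {u : ℕ → α → E} {v : ℕ → ℝ} {s : Set α} (hv : Summable v)
    (h : ∀ n, ∀ x ∈ s, ‖u (n + 1) x - u n x‖ ≤ v n) :
    TendstoUniformlyOn u (fun x => limUnder atTop fun n => u n x) atTop s := by
  have hu : TendstoUniformlyOn u (fun x => u 0 x + ∑' n, (u (n + 1) x - u n x)) atTop s := by
    have hd := Metric.tendstoUniformlyOn_iff.1 (tendstoUniformlyOn_tsum_nat hv h)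
    refine Metric.tendstoUniformlyOn_iff.2 fun ε hε => ?_
    filter_upwards [hd ε hε] with n hn x hx
    have htel : u n x = u 0 x + ∑ k ∈ Finset.range n, (u (k + 1) x - u k x) := by
      rw [Finset.sum_range_sub (u · x), add_sub_cancel]
    rw [htel, dist_add_left]
    exact hn x hx
  exact hu.congr_right fun x hx => (hu.tendsto_at hx).limUnder_eq.symm

section Koenigs

variable {𝕜 : Type*} [NontriviallyNormedField 𝕜] {f : 𝕜 → 𝕜} {z₀ a z : 𝕜} {n : ℕ}

variable (f z₀ a) in
def koenigsApprox (n : ℕ) (z : 𝕜) : 𝕜 := (f^[n] z - z₀) / a ^ n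

variable (f z₀ a) in
/-- Where the normalized iterates diverge, `limUnder` gives a junk value. -/
noncomputable def koenigsFun (z : 𝕜) : 𝕜 := limUnder atTop fun n => koenigsApprox f z₀ a n z

theorem koenigsApprox_self (hfix : f z₀ = z₀) : koenigsApprox f z₀ a n z₀ = 0 := by
  simp [koenigsApprox, Function.iterate_fixed hfix]

theorem koenigsApprox_apply_eq_mul (ha : a ≠ 0) :
    koenigsApprox f z₀ a n (f z) = a * koenigsApprox f z₀ a (n + 1) z := by
  rw [koenigsApprox, koenigsApprox, ← Function.iterate_succ_apply, pow_succ]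
  field_simp

theorem koenigsApprox_succ_sub (ha : a ≠ 0) :
    koenigsApprox f z₀ a (n + 1) z - koenigsApprox f z₀ a n z =
      (f (f^[n] z) - z₀ - (f^[n] z - z₀) * a) / a ^ (n + 1) := by
  rw [koenigsApprox, koenigsApprox, Function.iterate_succ_apply', pow_succ]
  field_simp

theorem hasDerivAt_koenigsApprox (hf : HasDerivAt f a z₀) (hfix : f z₀ = z₀) (ha : a ≠ 0) :
    HasDerivAt (koenigsApprox f z₀ a n) 1 z₀ := by
  unfold koenigsApprox
  simpa [ha] using ((hf.iterate z₀ hfix n).sub_const z₀).div_const (a ^ n)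

theorem differentiableOn_koenigsApprox {s : Set 𝕜} (hf : DifferentiableOn 𝕜 f s)
    (hs : MapsTo f s s) : DifferentiableOn 𝕜 (koenigsApprox f z₀ a n) s :=
  ((hf.iterate hs n).sub_const z₀).div_const _

theorem norm_koenigsApprox_succ_sub_le {r c M : ℝ} (ha : a ≠ 0) (hM : 0 ≤ M)
    (hquad : ∀ z ∈ ball z₀ r, ‖f z - z₀ - (z - z₀) * a‖ ≤ M * ‖z - z₀‖ ^ 2)
    (hc₀ : 0 ≤ c) (hc₁ : c ≤ 1) (hcontr : ∀ z ∈ ball z₀ r, dist (f z) z₀ ≤ c * dist z z₀)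
    (hz : z ∈ ball z₀ r) :
    ‖koenigsApprox f z₀ a (n + 1) z - koenigsApprox f z₀ a n z‖ ≤
      M * r ^ 2 / ‖a‖ * (c ^ 2 / ‖a‖) ^ n := by
  have hw : ‖f^[n] z - z₀‖ ≤ c ^ n * r := by
    rw [← dist_eq_norm]
    calc dist (f^[n] z) z₀ ≤ c ^ n * dist z z₀ := dist_iterate_le_of_dist_le_mul hc₀ hc₁ hcontr hz n
      _ ≤ c ^ n * r := by gcongr; exact hz.le
  rw [koenigsApprox_succ_sub ha, norm_div, norm_pow]
  calc ‖f (f^[n] z) - z₀ - (f^[n] z - z₀) * a‖ / ‖a‖ ^ (n + 1)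
      ≤ M * (c ^ n * r) ^ 2 / ‖a‖ ^ (n + 1) := by
        gcongr
        exact (hquad _ ((mapsTo_ball_of_dist_le_mul hc₁ hcontr).iterate n hz)).trans (by gcongr)
    _ = M * r ^ 2 / ‖a‖ * (c ^ 2 / ‖a‖) ^ n := by
        have : ‖a‖ ≠ 0 := norm_ne_zero_iff.2 ha
        rw [div_pow, mul_pow, ← pow_mul]
        field_simp
        ring

theorem tendstoUniformlyOn_koenigsApprox [CompleteSpace 𝕜] {r c M : ℝ} (ha : a ≠ 0)
    (hM : 0 ≤ M) (hquad : ∀ z ∈ ball z₀ r, ‖f z - z₀ - (z - z₀) * a‖ ≤ M * ‖z - z₀‖ ^ 2)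
    (hc₀ : 0 ≤ c) (hc₁ : c ≤ 1) (hca : c ^ 2 < ‖a‖)
    (hcontr : ∀ z ∈ ball z₀ r, dist (f z) z₀ ≤ c * dist z z₀) :
    TendstoUniformlyOn (koenigsApprox f z₀ a) (koenigsFun f z₀ a) atTop (ball z₀ r) := by
  have hratio : c ^ 2 / ‖a‖ < 1 := (div_lt_one (norm_pos_iff.2 ha)).2 hca
  exact tendstoUniformlyOn_limUnder_of_norm_sub_le
    ((summable_geometric_of_lt_one (by positivity) hratio).mul_left _)
    fun n z hz => norm_koenigsApprox_succ_sub_le ha hM hquad hc₀ hc₁ hcontr hz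

theorem koenigsFun_self (hfix : f z₀ = z₀) : koenigsFun f z₀ a z₀ = 0 := by
  simpa [koenigsFun, koenigsApprox_self hfix] using (tendsto_const_nhds (x := (0 : 𝕜))).limUnder_eq

theorem koenigsFun_apply_eq_mul (ha : a ≠ 0)
    (hz : Tendsto (koenigsApprox f z₀ a · z) atTop (𝓝 (koenigsFun f z₀ a z))) :
    koenigsFun f z₀ a (f z) = a * koenigsFun f z₀ a z := by
  simp only [koenigsFun, koenigsApprox_apply_eq_mul ha]
  exact ((hz.comp (tendsto_add_atTop_nat 1)).const_mul a).limUnder_eq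

end Koenigs

section Complex

variable {f : ℂ → ℂ} {z₀ a : ℂ} {U : Set ℂ}

theorem differentiableOn_koenigsFun
    (hu : TendstoLocallyUniformlyOn (koenigsApprox f z₀ a) (koenigsFun f z₀ a) atTop U)
    (hU : IsOpen U) (hf : DifferentiableOn ℂ f U) (hfU : MapsTo f U U) :
    DifferentiableOn ℂ (koenigsFun f z₀ a) U :=
  hu.differentiableOn (Eventually.of_forall fun _ => differentiableOn_koenigsApprox hf hfU) hU

theorem deriv_koenigsFun
    (hu : TendstoLocallyUniformlyOn (koenigsApprox f z₀ a) (koenigsFun f z₀ a) atTop U)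
    (hU : IsOpen U) (hf : DifferentiableOn ℂ f U) (hfU : MapsTo f U U) (hz₀ : z₀ ∈ U)
    (hfa : HasDerivAt f a z₀) (hfix : f z₀ = z₀) (ha : a ≠ 0) :
    deriv (koenigsFun f z₀ a) z₀ = 1 := by
  have hderiv := (hu.deriv (Eventually.of_forall fun _ => differentiableOn_koenigsApprox hf hfU)
    hU).tendsto_at hz₀
  simp only [Function.comp_apply, (hasDerivAt_koenigsApprox hfa hfix ha).deriv] at hderiv
  exact tendsto_nhds_unique hderiv tendsto_const_nhds

end Complex

theorem koenigs_linearization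
    (f : ℂ → ℂ) (z₀ : ℂ) (hf : AnalyticAt ℂ f z₀) (hfix : f z₀ = z₀)
    (a : ℂ) (ha : a = deriv f z₀)
    (ha0 : 0 < ‖a‖) (ha1 : ‖a‖ < 1) :
    ∃ r : ℝ, 0 < r ∧ ∃ g : ℂ → ℂ,
      AnalyticOnNhd ℂ g (Metric.ball z₀ r) ∧
      Set.MapsTo f (Metric.ball z₀ r) (Metric.ball z₀ r) ∧
      g z₀ = 0 ∧ deriv g z₀ = 1 ∧ Set.InjOn g (Metric.ball z₀ r) ∧
      ∀ z ∈ Metric.ball z₀ r, g (f z) = a * g z := by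
  have ha₀ : a ≠ 0 := norm_pos_iff.1 ha0
  have hfa : HasDerivAt f a z₀ := ha ▸ hf.differentiableAt.hasDerivAt
  obtain ⟨c, hac, hc_sqrt⟩ := exists_between (Real.lt_sqrt_self_iff.2 ⟨ha0.ne', ha1⟩)
  have hc₀ : 0 ≤ c := ha0.le.trans hac.le
  have hc₁ : c ≤ 1 := hc_sqrt.le.trans (Real.sqrt_le_one.2 ha1.le)
  obtain ⟨M, hM, hquad⟩ := hf.exists_eventually_norm_sub_sub_smul_deriv_le
  rw [hfix, ← ha] at hquad
  obtain ⟨r, hr, hball⟩ := eventually_nhds_iff_ball.1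
    ((hf.eventually_analyticAt.and hquad).and (hfix ▸ hfa.eventually_dist_le_mul hac))
  have hcontr := fun z hz => (hball z hz).2
  have hmaps := mapsTo_ball_of_dist_le_mul hc₁ hcontr
  have hdiff : DifferentiableOn ℂ f (ball z₀ r) :=
    fun z hz => (hball z hz).1.1.differentiableAt.differentiableWithinAt
  have hu := tendstoUniformlyOn_koenigsApprox ha₀ hM (fun z hz => (hball z hz).1.2) hc₀ hc₁
    ((Real.lt_sqrt hc₀).1 hc_sqrt) hcontr
  have hG := differentiableOn_koenigsFun hu.tendstoLocallyUniformlyOn isOpen_ball hdiff hmaps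
  have hG' := deriv_koenigsFun hu.tendstoLocallyUniformlyOn isOpen_ball hdiff hmaps
    (mem_ball_self hr) hfa hfix ha₀
  obtain ⟨ε, hε, hinj⟩ := (hG.analyticAt (ball_mem_nhds z₀ hr)).hasStrictDerivAt.exists_injOn_ball
    (hG' ▸ one_ne_zero)
  have hsub : ball z₀ (min r ε) ⊆ ball z₀ r := ball_subset_ball (min_le_left _ _)
  refine ⟨min r ε, lt_min hr hε, koenigsFun f z₀ a, (hG.analyticOnNhd isOpen_ball).mono hsub,
    mapsTo_ball_of_dist_le_mul hc₁ fun z hz => hcontr z (hsub hz), koenigsFun_self hfix, hG',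
    hinj.mono (ball_subset_ball (min_le_right _ _)),
    fun z hz => koenigsFun_apply_eq_mul ha₀ (hu.tendsto_at (hsub hz))⟩
end

section
/- Let f be a rational map of the Riemann sphere of degree d ≥ 2 determined by coprime polynomials P, Q with R z = eval z P / eval z Q. Suppose z₀, z₁, …, z_{m−1} ∈ ℂ form a cycle of length m ≥ 1: eval z_j Q ≠ 0 and R z_j = z_{(j+1) mod m} for all j. If the multiplier λ = ∏_{j<m} deriv R z_j is a root of unity (λ^k = 1 for some k ≥ 1), then ↑z₀ belongs to the Julia set J(f). In particular every rationally indifferent cycle of a rational map of degree at least two lies in the Julia set. -/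
open Polynomial Set Metric Filter MeasureTheory

/-!
Suppose `z₀` lies in the Fatou set. Equicontinuity of the iterates at `z₀`, whose orbit is a
finite cycle in `ℂ`, gives a disc around `z₀` on which every iterate of `R` is defined and the
iterates are uniformly bounded. The map `g = R^[m * k]` fixes `z₀` with `g' z₀ = 1`.

If `g` is not the identity near `z₀`, then `g w = w + (w - z₀) ^ p * ψ w` with `p ≥ 2` and
`ψ z₀ ≠ 0`, and inductively `g^[n] w = w + (w - z₀) ^ p * qₙ w` with `qₙ z₀ = n * ψ z₀`. Cauchy's
estimate for the bounded functions `g^[n] - id` bounds `n * ‖ψ z₀‖`, which is absurd.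

If `g` is the identity near `z₀`, then, being a rational function, `R^[m * k]` is the identity
off a finite set, so `R` is injective on a cofinite set. This is impossible in degree `d ≥ 2`:
for generic `a` the polynomial `Q(a) P - P(a) Q` has degree `d` and `a` as a simple root, so it
has another root `b`, and `R b = R a`.
-/

open Function
open scoped Topology Uniformity

section Field

variable {K : Type*} [Field K]

def ratFun (P Q : K[X]) (z : K) : K := P.eval z / Q.eval z

lemma IsCoprime.eval_ne_zero_of_eval_eq_zero {P Q : K[X]} (hPQ : IsCoprime P Q) {a : K}
    (hP : P.eval a = 0) : Q.eval a ≠ 0 := by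
  have := hPQ.map (evalRingHom a)
  rw [coe_evalRingHom, hP, isCoprime_zero_left] at this
  exact this.ne_zero

lemma IsCoprime.C_mul_sub_C_mul_ne_zero {P Q : K[X]} (hPQ : IsCoprime P Q)
    (hdeg : P.natDegree ≠ 0 ∨ Q.natDegree ≠ 0) {a b : K} (hab : a ≠ 0 ∨ b ≠ 0) :
    C a * P - C b * Q ≠ 0 := by
  wlog ha : a ≠ 0 generalizing P Q a b
  · have hb : b ≠ 0 := hab.resolve_left ha
    intro h
    exact this (a := b) (b := a) hPQ.symm hdeg.symm (Or.inl hb) hb (by linear_combination -h)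
  intro h
  have hQ : Q.natDegree = 0 := by
    have hdvd : Q ∣ C a := hPQ.symm.dvd_of_dvd_mul_right ⟨C b, by linear_combination h⟩
    simpa using natDegree_le_of_dvd hdvd (C_ne_zero.2 ha)
  have hP : P.natDegree = 0 := by
    rw [← natDegree_C_mul ha, sub_eq_zero.1 h]
    exact Nat.eq_zero_of_le_zero ((natDegree_C_mul_le b Q).trans hQ.le)
  exact hdeg.elim (· hP) (· hQ)

lemma Polynomial.exists_isRoot_ne_of_not_isRoot_derivative [IsAlgClosed K] {G : K[X]}
    (hG : 2 ≤ G.natDegree) {a : K} (ha : ¬ (derivative G).IsRoot a) :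
    ∃ b, G.IsRoot b ∧ b ≠ a := by
  classical
  have hG0 : G ≠ 0 := by rintro rfl; simp at hG
  have hmult : G.roots.count a ≤ 1 := by
    rw [count_roots]
    exact not_lt.1 fun h => ha ((one_lt_rootMultiplicity_iff_isRoot hG0).1 h).2
  by_contra! hall
  have hrep : G.roots = Multiset.replicate G.roots.card a :=
    Multiset.eq_replicate_card.2 fun b hb => hall b (isRoot_of_mem_roots hb)
  have : G.roots.count a = G.natDegree := by
    rw [hrep, Multiset.count_replicate_self, IsAlgClosed.card_roots_eq_natDegree]
  omega

theorem ratFun_not_injOn [IsAlgClosed K] [CharZero K] {P Q : K[X]} (hPQ : IsCoprime P Q)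
    (hdeg : 2 ≤ max P.natDegree Q.natDegree) {S : Set K} (hS : Sᶜ.Finite) :
    ¬ S.InjOn (ratFun P Q) := by
  intro hinj
  set d := max P.natDegree Q.natDegree
  have hdeg0 : P.natDegree ≠ 0 ∨ Q.natDegree ≠ 0 := by omega
  -- the roots of `G c` are the solutions `b` of `ratFun P Q b = ratFun P Q c`
  set G : K → K[X] := fun c => C (Q.eval c) * P - C (P.eval c) * Q
  have hG0 (c : K) : G c ≠ 0 := hPQ.C_mul_sub_C_mul_ne_zero hdeg0 <|
    or_iff_not_imp_right.2 fun hP => hPQ.eval_ne_zero_of_eval_eq_zero (not_not.1 hP)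
  have hP0 : P ≠ 0 := by
    rintro rfl
    exact hdeg0.elim (· natDegree_zero)
      (· (natDegree_eq_zero_of_isUnit (isCoprime_zero_left.1 hPQ)))
  have hQ0 : Q ≠ 0 := by
    rintro rfl
    exact hdeg0.elim (· (natDegree_eq_zero_of_isUnit (isCoprime_zero_right.1 hPQ)))
      (· natDegree_zero)
  set L := C (P.coeff d) * Q - C (Q.coeff d) * P
  have hL0 : L ≠ 0 := by
    refine hPQ.symm.C_mul_sub_C_mul_ne_zero hdeg0.symm ?_
    rcases max_choice P.natDegree Q.natDegree with h | h
    · exact .inl <| by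
        rw [show d = P.natDegree from h, coeff_natDegree]; exact leadingCoeff_ne_zero.2 hP0
    · exact .inr <| by
        rw [show d = Q.natDegree from h, coeff_natDegree]; exact leadingCoeff_ne_zero.2 hQ0
  have hW0 : wronskian Q P ≠ 0 := by
    rw [Ne, hPQ.symm.wronskian_eq_zero_iff, derivative_eq_zero, derivative_eq_zero]
    tauto
  have hbad : (Sᶜ ∪ {x | Q.IsRoot x} ∪ {x | (wronskian Q P).IsRoot x} ∪ {x | L.IsRoot x} ∪
      ⋃ b ∈ Sᶜ, {x | (G b).IsRoot x}).Finite :=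
    ((((hS.union (finite_setOfPred_isRoot hQ0)).union
      (finite_setOfPred_isRoot hW0)).union (finite_setOfPred_isRoot hL0)).union
      (hS.biUnion fun b _ => finite_setOfPred_isRoot (hG0 b)))
  obtain ⟨a, ha⟩ := hbad.exists_notMem
  simp only [mem_union, mem_compl_iff, mem_iUnion, mem_ofPred_eq, not_or, not_not,
    exists_prop, not_exists, not_and] at ha
  obtain ⟨⟨⟨⟨haS, hQa⟩, hWa⟩, hLa⟩, hGa⟩ := ha
  have hGa_deg : 2 ≤ (G a).natDegree := by
    refine hdeg.trans (le_natDegree_of_ne_zero ?_)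
    simp only [G, L, coeff_sub, coeff_C_mul, IsRoot, eval_sub, eval_mul, eval_C] at hLa ⊢
    contrapose! hLa
    linear_combination hLa
  have hGa' : ¬ (derivative (G a)).IsRoot a := by
    simpa [G, wronskian, mul_comm] using hWa
  obtain ⟨b, hb, hba⟩ := exists_isRoot_ne_of_not_isRoot_derivative hGa_deg hGa'
  simp only [G, IsRoot, eval_sub, eval_mul, eval_C] at hb
  have hbS : b ∈ S := by
    by_contra hbS
    exact hGa b hbS (by simp only [G, IsRoot, eval_sub, eval_mul, eval_C]; linear_combination -hb)
  have hQb : Q.eval b ≠ 0 := by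
    intro hQb
    refine hPQ.eval_ne_zero_of_eval_eq_zero ?_ hQb
    simpa [hQb, IsRoot.def.not.1 hQa] using hb
  refine hba (hinj hbS haS ?_)
  rw [ratFun, ratFun, div_eq_div_iff hQb hQa]
  linear_combination hb

lemma eval_aeval_homogenize {S : K[X]} {d : ℕ} (hS : S.natDegree ≤ d) (v : Fin 2 → K[X]) {x : K}
    (hx : (v 1).eval x ≠ 0) :
    (MvPolynomial.aeval v (S.homogenize d)).eval x =
      S.eval ((v 0).eval x / (v 1).eval x) * (v 1).eval x ^ d := by
  have := MvPolynomial.comp_aeval_apply (f := v) (aeval x) (S.homogenize d)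
  simp only [coe_aeval_eq_eval] at this
  exact this.trans (eval_homogenize hS _ hx)

noncomputable def iterateNumDen (P Q : K[X]) (d : ℕ) : ℕ → Fin 2 → K[X]
  | 0 => ![X, 1]
  | n + 1 => ![MvPolynomial.aeval (iterateNumDen P Q d n) (P.homogenize d),
      MvPolynomial.aeval (iterateNumDen P Q d n) (Q.homogenize d)]

variable {P Q : K[X]} {d : ℕ}

lemma eval_iterateNumDen_succ_one (hQ : Q.natDegree ≤ d) {x : K} {n : ℕ}
    (hx : (iterateNumDen P Q d n 1).eval x ≠ 0) :
    (iterateNumDen P Q d (n + 1) 1).eval x =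
      Q.eval ((iterateNumDen P Q d n 0).eval x / (iterateNumDen P Q d n 1).eval x) *
        (iterateNumDen P Q d n 1).eval x ^ d :=
  eval_aeval_homogenize hQ _ hx

lemma iterate_ratFun_eq_div_eval_iterateNumDen (hP : P.natDegree ≤ d) (hQ : Q.natDegree ≤ d)
    {x : K} {n : ℕ} (h : ∀ j < n, Q.eval ((ratFun P Q)^[j] x) ≠ 0) :
    (iterateNumDen P Q d n 1).eval x ≠ 0 ∧
      (ratFun P Q)^[n] x = (iterateNumDen P Q d n 0).eval x / (iterateNumDen P Q d n 1).eval x := by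
  induction n with
  | zero => simp [iterateNumDen]
  | succ n ih =>
    obtain ⟨hB, hRn⟩ := ih fun j hj => h j (Nat.lt_succ_of_lt hj)
    have hBsucc := eval_iterateNumDen_succ_one (P := P) hQ hB
    have hA : (iterateNumDen P Q d (n + 1) 0).eval x =
        P.eval ((iterateNumDen P Q d n 0).eval x / (iterateNumDen P Q d n 1).eval x) *
          (iterateNumDen P Q d n 1).eval x ^ d :=
      eval_aeval_homogenize hP _ hB
    rw [← hRn] at hBsucc hA
    refine ⟨hBsucc ▸ mul_ne_zero (h n n.lt_succ_self) (pow_ne_zero _ hB), ?_⟩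
    rw [hBsucc, hA, mul_div_mul_right _ _ (pow_ne_zero _ hB), iterate_succ_apply']
    rfl

lemma eval_iterate_ne_zero_of_eval_iterateNumDen_ne_zero (hP : P.natDegree ≤ d)
    (hQ : Q.natDegree ≤ d) {x : K} {n : ℕ} (h : ∀ j ≤ n, (iterateNumDen P Q d j 1).eval x ≠ 0) :
    ∀ j < n, Q.eval ((ratFun P Q)^[j] x) ≠ 0 := by
  intro j hj
  induction j using Nat.strong_induction_on with
  | _ j ih =>
    obtain ⟨hB, hRj⟩ :=
      iterate_ratFun_eq_div_eval_iterateNumDen hP hQ fun i hi => ih i hi (hi.trans hj)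
    have := h (j + 1) hj
    rw [eval_iterateNumDen_succ_one hQ hB, ← hRj] at this
    exact left_ne_zero_of_mul this

end Field

theorem eventually_cofinite_isPeriodicPt_ratFun {K : Type*} [NontriviallyNormedField K]
    {P Q : K[X]} {x₀ : K} {n : ℕ} (hx₀ : ∀ j < n, Q.eval ((ratFun P Q)^[j] x₀) ≠ 0)
    (h : ∀ᶠ x in 𝓝 x₀, IsPeriodicPt (ratFun P Q) n x) :
    ∀ᶠ x in cofinite, IsPeriodicPt (ratFun P Q) n x := by
  set d := max P.natDegree Q.natDegree
  have hP : P.natDegree ≤ d := le_max_left _ _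
  have hQ : Q.natDegree ≤ d := le_max_right _ _
  set A := iterateNumDen P Q d n 0
  set B := fun j => iterateNumDen P Q d j 1
  have hB₀ : ∀ j ≤ n, (B j).eval x₀ ≠ 0 := fun j hj =>
    (iterate_ratFun_eq_div_eval_iterateNumDen hP hQ fun i hi => hx₀ i (hi.trans_le hj)).1
  have hD : ∀ᶠ x in cofinite, ∀ j ≤ n, (B j).eval x ≠ 0 :=
    (eventually_all_finite (Set.finite_le_nat n)).2 fun j hj =>
      eventually_cofinite.2 <| (finite_setOfPred_isRoot (p := B j) fun h0 =>
        hB₀ j hj (by rw [h0, eval_zero])).subset fun _ hx => not_not.1 hx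
  have hformula (x : K) (hx : ∀ j ≤ n, (B j).eval x ≠ 0) :
      (ratFun P Q)^[n] x * (B n).eval x = A.eval x := by
    rw [(iterate_ratFun_eq_div_eval_iterateNumDen hP hQ
      (eval_iterate_ne_zero_of_eval_iterateNumDen_ne_zero hP hQ hx)).2,
      div_mul_cancel₀ _ (hx n le_rfl)]
  have hAB : A = X * B n := by
    have hnhds : ∀ᶠ x in 𝓝 x₀, IsPeriodicPt (ratFun P Q) n x ∧ ∀ j ≤ n, (B j).eval x ≠ 0 :=
      h.and <| mem_of_superset ((eventually_cofinite.1 hD).isClosed.isOpen_compl.mem_nhds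
        (not_not.2 hB₀)) fun _ hx => not_not.1 hx
    refine sub_eq_zero.1 (eq_zero_of_infinite_isRoot _
      ((infinite_of_mem_nhds x₀ hnhds).mono fun x hx => ?_))
    rw [mem_ofPred_eq, IsRoot.def, eval_sub, eval_mul, eval_X, ← hformula x hx.2, hx.1.eq,
      sub_self]
  filter_upwards [hD] with x hx
  have := hformula x hx
  rwa [hAB, eval_mul, eval_X, mul_left_inj' (hx n le_rfl)] at this

theorem not_eventually_isPeriodicPt_ratFun {K : Type*} [NontriviallyNormedField K]
    [IsAlgClosed K] [CharZero K] {P Q : K[X]} (hPQ : IsCoprime P Q)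
    (hdeg : 2 ≤ max P.natDegree Q.natDegree)
    {x₀ : K} {n : ℕ} (hn : 0 < n) (hx₀ : ∀ j < n, Q.eval ((ratFun P Q)^[j] x₀) ≠ 0) :
    ¬ ∀ᶠ x in 𝓝 x₀, IsPeriodicPt (ratFun P Q) n x := fun h =>
  ratFun_not_injOn hPQ hdeg (eventually_cofinite_isPeriodicPt_ratFun hx₀ h)
    (bijOn_ptsOfPeriod _ hn).injOn

section Calculus

variable {𝕜 : Type*} [NontriviallyNormedField 𝕜]

lemma differentiableAt_ratFun {P Q : 𝕜[X]} {z : 𝕜} (hz : Q.eval z ≠ 0) :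
    DifferentiableAt 𝕜 (ratFun P Q) z :=
  P.differentiableAt.div Q.differentiableAt hz

lemma hasDerivAt_iterate_prod {f : 𝕜 → 𝕜} {x : 𝕜} {n : ℕ}
    (hf : ∀ j < n, DifferentiableAt 𝕜 f (f^[j] x)) :
    HasDerivAt f^[n] (∏ j ∈ Finset.range n, deriv f (f^[j] x)) x := by
  induction n with
  | zero => simpa using hasDerivAt_id x
  | succ n ih =>
    rw [iterate_succ', Finset.prod_range_succ, mul_comm]
    exact (hf n n.lt_succ_self).hasDerivAt.comp x (ih fun j hj => hf j (Nat.lt_succ_of_lt hj))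

lemma differentiableAt_iterate_ratFun {P Q : 𝕜[X]} {x : 𝕜} {n : ℕ}
    (h : ∀ j < n, Q.eval ((ratFun P Q)^[j] x) ≠ 0) : DifferentiableAt 𝕜 (ratFun P Q)^[n] x :=
  (hasDerivAt_iterate_prod fun j hj => differentiableAt_ratFun (h j hj)).differentiableAt

end Calculus

section Parabolic

lemma norm_le_div_pow_of_eventuallyEq_pow_mul {h q : ℂ → ℂ} {c : ℂ} {p : ℕ} {r C : ℝ}
    (hh : DifferentiableOn ℂ h (ball c r)) (hq : DifferentiableAt ℂ q c)
    (hhq : ∀ᶠ w in 𝓝 c, h w = (w - c) ^ p * q w) (hC : ∀ w ∈ ball c r, ‖h w‖ ≤ C)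
    {ρ : ℝ} (hρ : 0 < ρ) (hρr : ρ < r) : ‖q c‖ ≤ C / ρ ^ p := by
  set q' := update (fun w => h w / (w - c) ^ p) c (q c)
  have hq'_ne : ∀ w ≠ c, q' w = h w / (w - c) ^ p := fun w hw => update_of_ne hw _ _
  have hq'c : q' =ᶠ[𝓝 c] q := by
    filter_upwards [hhq] with w hw
    rcases eq_or_ne w c with rfl | hwc
    · simp [q']
    · rw [hq'_ne w hwc, hw, mul_div_cancel_left₀ _ (pow_ne_zero _ (sub_ne_zero.2 hwc))]
  have hdiff : DifferentiableOn ℂ q' (ball c r) := by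
    intro w hw
    rcases eq_or_ne w c with rfl | hwc
    · exact (hq.congr_of_eventuallyEq hq'c).differentiableWithinAt
    · have : q' =ᶠ[𝓝 w] fun w => h w / (w - c) ^ p := by
        filter_upwards [isOpen_ne.mem_nhds hwc] with v hv using hq'_ne v hv
      refine (DifferentiableAt.congr_of_eventuallyEq ?_ this).differentiableWithinAt
      exact (hh.differentiableAt (isOpen_ball.mem_nhds hw)).div (by fun_prop)
        (pow_ne_zero _ (sub_ne_zero.2 hwc))
  have hsphere : ∀ w ∈ frontier (ball c ρ), ‖q' w‖ ≤ C / ρ ^ p := by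
    intro w hw
    rw [frontier_ball c hρ.ne', mem_sphere_iff_norm] at hw
    have hwc : w ≠ c := by rintro rfl; exact hρ.ne (by simpa using hw)
    rw [hq'_ne w hwc, norm_div, norm_pow, hw]
    gcongr
    exact hC w (mem_ball_iff_norm.2 (hw ▸ hρr))
  rw [← hq'c.eq_of_nhds]
  exact Complex.norm_le_of_forall_mem_frontier_norm_le isBounded_ball
    (hdiff.diffContOnCl_ball (closedBall_subset_ball hρr)) hsphere
    (subset_closure (mem_ball_self hρ))

lemma exists_iterate_eq_add_pow_mul {g ψ : ℂ → ℂ} {c : ℂ} {p : ℕ} (hp : 2 ≤ p)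
    (hψ : AnalyticAt ℂ ψ c) (hg : ∀ᶠ w in 𝓝 c, g w = w + (w - c) ^ p * ψ w) (n : ℕ) :
    ∃ q : ℂ → ℂ, AnalyticAt ℂ q c ∧ q c = n * ψ c ∧
      ∀ᶠ w in 𝓝 c, g^[n] w = w + (w - c) ^ p * q w := by
  obtain ⟨k, rfl⟩ : ∃ k, p = k + 2 := ⟨p - 2, by omega⟩
  induction n with
  | zero => exact ⟨0, analyticAt_const, by simp, by simp⟩
  | succ n ih =>
    obtain ⟨q, hq, hqc, hgq⟩ := ih
    set u : ℂ → ℂ := fun w => w + (w - c) ^ (k + 2) * q w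
    have hu : AnalyticAt ℂ u c := by fun_prop
    have huc : u c = c := by simp [u]
    have hψu : AnalyticAt ℂ ψ (u c) := by rw [huc]; exact hψ
    -- `u w - c = (w - c) * (1 + (w - c) ^ (k + 1) * q w)`, and the second factor is `1` at `c`
    refine ⟨fun w => q w + (1 + (w - c) ^ (k + 1) * q w) ^ (k + 2) * ψ (u w),
      hq.add (AnalyticAt.mul (by fun_prop) (hψu.comp hu)), by simp [huc, hqc]; ring, ?_⟩
    have hgu : ∀ᶠ w in 𝓝 c, g (u w) = u w + (u w - c) ^ (k + 2) * ψ (u w) :=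
      (show Tendsto u (𝓝 c) (𝓝 c) by simpa only [huc] using hu.continuousAt.tendsto).eventually hg
    filter_upwards [hgq, hgu] with w hw hgw
    have hsub : u w - c = (w - c) * (1 + (w - c) ^ (k + 1) * q w) := by ring
    rw [iterate_succ_apply', hw, hgw, hsub, mul_pow]
    ring

lemma exists_eventuallyEq_add_pow_mul_of_hasDerivAt_one {g : ℂ → ℂ} {c : ℂ}
    (hg : AnalyticAt ℂ g c) (hfix : g c = c) (hg' : HasDerivAt g 1 c)
    (hid : ¬ ∀ᶠ w in 𝓝 c, g w = w) :
    ∃ p, 2 ≤ p ∧ ∃ ψ : ℂ → ℂ, AnalyticAt ℂ ψ c ∧ ψ c ≠ 0 ∧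
      ∀ᶠ w in 𝓝 c, g w = w + (w - c) ^ p * ψ w := by
  set φ : ℂ → ℂ := fun w => g w - w
  have hφ : AnalyticAt ℂ φ c := hg.sub analyticAt_id
  have hφ_top : analyticOrderAt φ c ≠ ⊤ := fun h =>
    hid ((analyticOrderAt_eq_top.1 h).mono fun w hw => sub_eq_zero.1 hw)
  set p := (analyticOrderAt φ c).toNat
  have hp : analyticOrderAt φ c = p := (ENat.natCast_toNat hφ_top).symm
  have hp2 : 2 ≤ p := by
    have : ((2 : ℕ) : ℕ∞) ≤ analyticOrderAt φ c := by
      rw [natCast_le_analyticOrderAt_iff_iteratedDeriv_eq_zero hφ]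
      intro i hi
      interval_cases i
      · simp [φ, hfix]
      · simpa using (hg'.fun_sub (hasDerivAt_id' c)).deriv
    exact_mod_cast hp ▸ this
  obtain ⟨ψ, hψ, hψc, hφψ⟩ := hφ.analyticOrderAt_eq_natCast.1 hp
  exact ⟨p, hp2, ψ, hψ, hψc, hφψ.mono fun w hw => by rw [← hw.trans (smul_eq_mul _ _)]; ring⟩

theorem eventually_eq_self_of_iterate_bounded {g : ℂ → ℂ} {c : ℂ} {r M : ℝ} (hr : 0 < r)
    (hfix : g c = c) (hg' : HasDerivAt g 1 c) (hdiff : ∀ n, DifferentiableOn ℂ g^[n] (ball c r))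
    (hbdd : ∀ n, ∀ w ∈ ball c r, ‖g^[n] w‖ ≤ M) :
    ∀ᶠ w in 𝓝 c, g w = w := by
  by_contra hid
  have hg : AnalyticAt ℂ g c := (hdiff 1).analyticAt (ball_mem_nhds c hr)
  obtain ⟨p, hp, ψ, hψ, hψc, hgψ⟩ :=
    exists_eventuallyEq_add_pow_mul_of_hasDerivAt_one hg hfix hg' hid
  -- the `p`-th Taylor coefficient of `g^[n] - id` is `n * ψ c`, but these functions are bounded
  set K := (M + (‖c‖ + r)) / (r / 2) ^ p
  have hbound (n : ℕ) : n * ‖ψ c‖ ≤ K := by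
    obtain ⟨q, hq, hqc, hgq⟩ := exists_iterate_eq_add_pow_mul hp hψ hgψ n
    have hsub : ∀ w ∈ ball c r, ‖g^[n] w - w‖ ≤ M + (‖c‖ + r) := fun w hw =>
      (norm_sub_le _ _).trans (add_le_add (hbdd n w hw)
        ((norm_le_norm_add_norm_sub' w c).trans (add_le_add_right (mem_ball_iff_norm.1 hw).le _)))
    simpa [hqc] using norm_le_div_pow_of_eventuallyEq_pow_mul ((hdiff n).sub differentiableOn_id)
      hq.differentiableAt (hgq.mono fun w hw => by simp [hw]) hsub (half_pos hr) (half_lt_self hr)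
  obtain ⟨n, hn⟩ := exists_nat_gt (K / ‖ψ c‖)
  rw [div_lt_iff₀ (norm_pos_iff.2 hψc)] at hn
  exact (hbound n).not_gt hn

end Parabolic

lemma EquicontinuousAt.eventually_forall_mem_s6 {ι X α : Type*} [TopologicalSpace X]
    [UniformSpace α] {F : ι → X → α} {x : X} (hF : EquicontinuousAt F x) {K O : Set α}
    (hK : IsCompact K) (hO : IsOpen O) (hKO : K ⊆ O) (hx : ∀ i, F i x ∈ K) :
    ∀ᶠ y in 𝓝 x, ∀ i, F i y ∈ O := by
  obtain ⟨V, hV, hVO⟩ :=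
    (hK.nhdsSet_basis_uniformity (𝓤 α).basis_sets).mem_iff.1 (hO.mem_nhdsSet.2 hKO)
  filter_upwards [hF V hV] with y hy i
  exact hVO (mem_biUnion (hx i) (hy i))

lemma equicontinuousAt_iterate_of_mem_fatouSet {f : OnePoint ℂ → OnePoint ℂ} {x : OnePoint ℂ}
    (hx : x ∈ FatouSet f) : EquicontinuousAt (fun n : ℕ => f^[n]) x := by
  obtain ⟨U, hU, hxU, hF⟩ := hx
  intro V hV
  simpa [nhdsWithin_eq_nhds.2 (hU.mem_nhds hxU)] using hF x hxU V hV

section RationalMap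

open scoped OnePoint

variable {f : OnePoint ℂ → OnePoint ℂ} {P Q : ℂ[X]}

lemma apply_coe_eq_infty_of_eval_eq_zero (hf : Continuous f) (hPQ : IsCoprime P Q) (hQ : Q ≠ 0)
    (hfPQ : ∀ z : ℂ, Q.eval z ≠ 0 → f z = ((P.eval z / Q.eval z : ℂ) : OnePoint ℂ))
    {w : ℂ} (hw : Q.eval w = 0) : f w = ∞ := by
  set s := {x : ℂ | Q.eval x ≠ 0}
  have hs : (𝓝[s] w).NeBot :=
    mem_closure_iff_nhdsWithin_neBot.1 ((finite_setOfPred_isRoot hQ).countable.dense_compl ℂ w)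
  by_contra h
  obtain ⟨c, hc⟩ := OnePoint.ne_infty_iff_exists.1 h
  -- if `f w = c` were finite, `P = Q * (P / Q)` would tend to `0 * c` at the pole `w`
  have hR : Tendsto (ratFun P Q) (𝓝[s] w) (𝓝 c) := by
    have hcont := ((hf.comp OnePoint.continuous_coe).tendsto w).mono_left
      (nhdsWithin_le_nhds (s := s))
    rw [comp_apply, ← hc] at hcont
    refine OnePoint.isOpenEmbedding_coe.isInducing.tendsto_nhds_iff.2 (hcont.congr' ?_)
    filter_upwards [self_mem_nhdsWithin] with x hx using hfPQ x hx
  have hQR : Tendsto (fun x => Q.eval x * ratFun P Q x) (𝓝[s] w) (𝓝 0) := by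
    simpa [hw] using ((Q.continuous.tendsto w).mono_left nhdsWithin_le_nhds).mul hR
  have hP : Tendsto P.eval (𝓝[s] w) (𝓝 (P.eval w)) :=
    (P.continuous.tendsto w).mono_left nhdsWithin_le_nhds
  refine hPQ.symm.eval_ne_zero_of_eval_eq_zero hw (tendsto_nhds_unique (hP.congr' ?_) hQR)
  filter_upwards [self_mem_nhdsWithin] with x hx
  exact (mul_div_cancel₀ _ hx).symm

lemma iterate_coe_eq_coe_iterate_ratFun
    (hfPQ : ∀ z : ℂ, Q.eval z ≠ 0 → f z = ((P.eval z / Q.eval z : ℂ) : OnePoint ℂ))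
    {y : ℂ} {n : ℕ} (h : ∀ j < n, Q.eval ((ratFun P Q)^[j] y) ≠ 0) :
    f^[n] (y : OnePoint ℂ) = ((ratFun P Q)^[n] y : ℂ) := by
  induction n with
  | zero => rfl
  | succ n ih =>
    rw [iterate_succ_apply', ih fun j hj => h j (Nat.lt_succ_of_lt hj),
      hfPQ _ (h n n.lt_succ_self), iterate_succ_apply']
    rfl

lemma eval_iterate_ratFun_ne_zero_of_iterate_ne_infty (hf : Continuous f) (hPQ : IsCoprime P Q)
    (hQ : Q ≠ 0) (hfPQ : ∀ z : ℂ, Q.eval z ≠ 0 → f z = ((P.eval z / Q.eval z : ℂ) : OnePoint ℂ))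
    {y : ℂ} (h : ∀ n, f^[n] (y : OnePoint ℂ) ≠ ∞) (n : ℕ) :
    Q.eval ((ratFun P Q)^[n] y) ≠ 0 := by
  induction n using Nat.strong_induction_on with
  | _ n ih =>
    intro hn
    apply h (n + 1)
    rw [iterate_succ_apply', iterate_coe_eq_coe_iterate_ratFun hfPQ ih]
    exact apply_coe_eq_infty_of_eval_eq_zero hf hPQ hQ hfPQ hn

lemma exists_ball_iterate_ratFun_bounded_of_mem_fatouSet (hf : Continuous f)
    (hPQ : IsCoprime P Q) (hQ : Q ≠ 0)
    (hfPQ : ∀ z : ℂ, Q.eval z ≠ 0 → f z = ((P.eval z / Q.eval z : ℂ) : OnePoint ℂ))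
    {x : ℂ} (hx : (x : OnePoint ℂ) ∈ FatouSet f) (hpoles : ∀ n, Q.eval ((ratFun P Q)^[n] x) ≠ 0)
    {M : ℝ} (hM : ∀ n, ‖(ratFun P Q)^[n] x‖ ≤ M) :
    ∃ r > 0, ∀ y ∈ ball x r, ∀ n,
      Q.eval ((ratFun P Q)^[n] y) ≠ 0 ∧ ‖(ratFun P Q)^[n] y‖ < M + 1 := by
  have hO := (equicontinuousAt_iterate_of_mem_fatouSet hx).eventually_forall_mem_s6
    ((isCompact_closedBall 0 M).image OnePoint.continuous_coe)
    (OnePoint.isOpen_image_coe.2 isOpen_ball) (image_mono (closedBall_subset_ball (lt_add_one M)))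
    fun n => iterate_coe_eq_coe_iterate_ratFun hfPQ (fun j _ => hpoles j) ▸
      mem_image_of_mem _ (mem_closedBall_zero_iff.2 (hM n))
  rw [OnePoint.nhds_coe_eq, eventually_map] at hO
  obtain ⟨r, hr, hball⟩ := eventually_nhds_iff_ball.1 hO
  refine ⟨r, hr, fun y hy => ?_⟩
  have hpoles_y := eval_iterate_ratFun_ne_zero_of_iterate_ne_infty hf hPQ hQ hfPQ
    fun n hn => OnePoint.infty_notMem_image_coe (hn ▸ hball y hy n)
  refine fun n => ⟨hpoles_y n, ?_⟩
  obtain ⟨w, hw, hwy⟩ := hball y hy n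
  rw [iterate_coe_eq_coe_iterate_ratFun hfPQ fun j _ => hpoles_y j, OnePoint.coe_eq_coe] at hwy
  simpa [hwy] using hw

end RationalMap

theorem coe_mem_juliaSet_of_isPeriodicPt_of_hasDerivAt_one {f : OnePoint ℂ → OnePoint ℂ}
    {P Q : ℂ[X]} (hf : Continuous f) (hPQ : IsCoprime P Q) (hQ : Q ≠ 0)
    (hfPQ : ∀ z : ℂ, Q.eval z ≠ 0 → f z = ((P.eval z / Q.eval z : ℂ) : OnePoint ℂ))
    (hdeg : 2 ≤ max P.natDegree Q.natDegree) {x : ℂ} {N : ℕ} (hN : 0 < N)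
    (hper : IsPeriodicPt (ratFun P Q) N x)
    (hpoles : ∀ n, Q.eval ((ratFun P Q)^[n] x) ≠ 0) (hmult : HasDerivAt (ratFun P Q)^[N] 1 x) :
    (x : OnePoint ℂ) ∈ JuliaSet f := by
  intro hx
  obtain ⟨M, hM⟩ := ((Finset.range N).image fun j => ‖(ratFun P Q)^[j] x‖).exists_le
  obtain ⟨r, hr, hball⟩ := exists_ball_iterate_ratFun_bounded_of_mem_fatouSet hf hPQ hQ hfPQ hx
    hpoles fun n => hper.iterate_mod_apply n ▸
      hM _ (Finset.mem_image_of_mem _ (Finset.mem_range.2 (n.mod_lt hN)))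
  refine not_eventually_isPeriodicPt_ratFun hPQ hdeg hN (fun j _ => hpoles j)
    (eventually_eq_self_of_iterate_bounded hr hper hmult (M := M + 1) (fun n y hy => ?_)
      fun n y hy => ?_)
  · rw [← iterate_mul]
    exact (differentiableAt_iterate_ratFun fun j _ => (hball y hy j).1).differentiableWithinAt
  · rw [← iterate_mul]
    exact (hball y hy _).2.le

theorem rationallyIndifferent_cycle_mem_juliaSet_general
    (f : OnePoint ℂ → OnePoint ℂ) (d : ℕ) (hd : 2 ≤ d)
    (P Q : Polynomial ℂ) (hf : Continuous f) (hPQ : IsCoprime P Q)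
    (hQ : Q ≠ 0)
    (hdeg : d = max P.natDegree Q.natDegree)
    (hfPQ : ∀ z : ℂ, Q.eval z ≠ 0 → f (z : OnePoint ℂ) = ((P.eval z / Q.eval z : ℂ) : OnePoint ℂ))
    (R : ℂ → ℂ) (hR : ∀ z : ℂ, R z = P.eval z / Q.eval z)
    (m : ℕ) (hm : 1 ≤ m) (z : ℕ → ℂ)
    (hQz : ∀ j < m, Q.eval (z j) ≠ 0)
    (hcyc : ∀ j < m, R (z j) = z ((j + 1) % m))
    (k : ℕ) (hk : 1 ≤ k)
    (hroot : (∏ j ∈ Finset.range m, deriv R (z j)) ^ k = 1) :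
    (z 0 : OnePoint ℂ) ∈ JuliaSet f := by
  obtain rfl : R = ratFun P Q := funext hR
  have horb (j : ℕ) : (ratFun P Q)^[j] (z 0) = z (j % m) := by
    induction j with
    | zero => rfl
    | succ j ih => rw [iterate_succ_apply', ih, hcyc _ (j.mod_lt hm), Nat.mod_add_mod]
  have hpoles (j : ℕ) : Q.eval ((ratFun P Q)^[j] (z 0)) ≠ 0 := horb j ▸ hQz _ (j.mod_lt hm)
  have hper : IsPeriodicPt (ratFun P Q) m (z 0) := by
    rw [IsPeriodicPt, IsFixedPt, horb, Nat.mod_self]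
  have hmult := hasDerivAt_iterate_prod (n := m) fun j _ => differentiableAt_ratFun (hpoles j)
  rw [Finset.prod_congr rfl fun j hj => by rw [horb, Nat.mod_eq_of_lt (Finset.mem_range.1 hj)]]
    at hmult
  refine coe_mem_juliaSet_of_isPeriodicPt_of_hasDerivAt_one hf hPQ hQ hfPQ (hdeg ▸ hd)
    (Nat.mul_pos hm hk) (hper.mul_const k) hpoles ?_
  rw [iterate_mul, ← hroot]
  exact HasDerivAt.iterate _ hmult hper k

theorem rationallyIndifferent_cycle_mem_juliaSet
    (f : OnePoint ℂ → OnePoint ℂ) (d : ℕ) (hd : 2 ≤ d)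
    (P Q : Polynomial ℂ) (hf : Continuous f) (hPQ : IsCoprime P Q)
    (hne : ¬(P.natDegree = 0 ∧ Q.natDegree = 0)) (hQ : Q ≠ 0)
    (hdeg : d = max P.natDegree Q.natDegree)
    (hfPQ : ∀ z : ℂ, Q.eval z ≠ 0 → f (z : OnePoint ℂ) = ((P.eval z / Q.eval z : ℂ) : OnePoint ℂ))
    (R : ℂ → ℂ) (hR : ∀ z : ℂ, R z = P.eval z / Q.eval z)
    (m : ℕ) (hm : 1 ≤ m) (z : ℕ → ℂ)
    (hQz : ∀ j < m, Q.eval (z j) ≠ 0)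
    (hcyc : ∀ j < m, R (z j) = z ((j + 1) % m))
    (k : ℕ) (hk : 1 ≤ k)
    (hroot : (∏ j ∈ Finset.range m, deriv R (z j)) ^ k = 1) :
    (z 0 : OnePoint ℂ) ∈ JuliaSet f :=
  rationallyIndifferent_cycle_mem_juliaSet_general f d hd P Q hf hPQ hQ hdeg hfPQ R hR m hm z hQz
    hcyc k hk hroot
end

section
/- Let f be a rational map of the Riemann sphere of degree d ≥ 2 determined by coprime polynomials P, Q, and let z₀ ∈ ℂ satisfy eval z₀ Q ≠ 0, R z₀ = z₀ and |deriv R z₀| < 1, where R z = eval z P / eval z Q. Let A = {w ∈ OnePoint ℂ | the sequence n ↦ f^[n] w tends to ↑z₀} be the basin of attraction of z₀. Then the topological frontier of A equals the Julia set: ∂A = J(f). -/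
open Polynomial Set Metric Filter MeasureTheory

/-!
Near the attracting fixed point `z₀` the map is a contraction, so its iterates converge uniformly
to `z₀` on a disc `B` around it. Hence the basin `A` is open and the iterates are equicontinuous
on `A`. On the complement of `closure A` the iterates omit `B`, so in the chart `u ↦ 1 / (u - z₀)`
they are holomorphic and bounded, and Schwarz's lemma makes them equicontinuous there. Conversely,
a point of `∂A` at which the iterates were equicontinuous would inherit convergence to `z₀` from
the nearby points of `A`, and so lie in the open set `A`.
-/

open OnePoint Topology Bornology Uniformity

/-- A chart of the sphere minus `c`; at `c` itself it takes the junk value `(c - c)⁻¹ = 0`. -/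
noncomputable def sphChart (c : ℂ) (u : OnePoint ℂ) : ℂ :=
  u.elim 0 fun v => (v - c)⁻¹

noncomputable def sphChartSymm (c : ℂ) (ζ : ℂ) : OnePoint ℂ :=
  if ζ = 0 then ∞ else ((c + ζ⁻¹ : ℂ) : OnePoint ℂ)

@[simp] lemma sphChart_coe (c v : ℂ) : sphChart c v = (v - c)⁻¹ := rfl

@[simp] lemma sphChart_infty (c : ℂ) : sphChart c ∞ = 0 := rfl

@[simp] lemma sphChartSymm_zero (c : ℂ) : sphChartSymm c 0 = ∞ := if_pos rfl

lemma sphChartSymm_of_ne_zero (c : ℂ) {ζ : ℂ} (h : ζ ≠ 0) :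
    sphChartSymm c ζ = ((c + ζ⁻¹ : ℂ) : OnePoint ℂ) := if_neg h

lemma sphChartSymm_sphChart {c : ℂ} {u : OnePoint ℂ} (h : u ≠ c) :
    sphChartSymm c (sphChart c u) = u := by
  induction u using OnePoint.rec with
  | infty => simp
  | coe v =>
    have hv : v - c ≠ 0 := sub_ne_zero.mpr fun hvc => h (by rw [hvc])
    simp [sphChartSymm_of_ne_zero c (inv_ne_zero hv)]

lemma tendsto_sphChartSymm_cobounded (c : ℂ) :
    Tendsto (sphChartSymm c) (cobounded ℂ) (𝓝 c) := by
  have h : Tendsto (fun ζ : ℂ => ((c + ζ⁻¹ : ℂ) : OnePoint ℂ)) (cobounded ℂ) (𝓝 c) :=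
    (continuous_coe.tendsto c).comp (by simpa using tendsto_inv₀_cobounded.const_add c)
  refine h.congr' ?_
  filter_upwards [eventually_ne_cobounded 0] with ζ hζ
  exact (sphChartSymm_of_ne_zero c hζ).symm

lemma continuous_sphChartSymm (c : ℂ) : Continuous (sphChartSymm c) := by
  refine continuous_iff_continuousAt.mpr fun ζ => ?_
  rcases eq_or_ne ζ 0 with rfl | hζ
  · rw [ContinuousAt, sphChartSymm_zero, ← nhdsNE_sup_pure, tendsto_sup]
    refine ⟨?_, by simpa using tendsto_pure_nhds (sphChartSymm c) 0⟩
    have h : Tendsto (fun ζ : ℂ => ((c + ζ⁻¹ : ℂ) : OnePoint ℂ)) (𝓝[≠] 0) (𝓝 ∞) := by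
      refine tendsto_coe_infty.comp ?_
      rw [coclosedCompact_eq_cocompact, ← cobounded_eq_cocompact]
      exact (tendsto_const_add_cobounded c).comp tendsto_inv₀_nhdsNE_zero
    exact h.congr' (eventually_nhdsWithin_of_forall fun ζ hζ => (sphChartSymm_of_ne_zero c hζ).symm)
  · have h : ContinuousAt (fun ζ : ℂ => ((c + ζ⁻¹ : ℂ) : OnePoint ℂ)) ζ :=
      continuous_coe.continuousAt.comp (continuousAt_const.add (continuousAt_inv₀ hζ))
    refine h.congr ?_
    filter_upwards [isOpen_ne.mem_nhds hζ] with ζ' hζ'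
    exact (sphChartSymm_of_ne_zero c hζ').symm

lemma continuousAt_sphChart {c : ℂ} {u : OnePoint ℂ} (h : u ≠ c) :
    ContinuousAt (sphChart c) u := by
  induction u using OnePoint.rec with
  | infty =>
    rw [continuousAt_infty', coclosedCompact_eq_cocompact, ← cobounded_eq_cocompact]
    simpa [Function.comp_def] using tendsto_inv₀_cobounded.comp (tendsto_sub_const_cobounded c)
  | coe v =>
    have hv : v - c ≠ 0 := sub_ne_zero.mpr fun hvc => h (by rw [hvc])
    rw [continuousAt_coe]
    exact (continuousAt_id.sub continuousAt_const).inv₀ hv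

lemma uniformContinuous_sphChartSymm (c : ℂ) : UniformContinuous (sphChartSymm c) :=
  (continuous_sphChartSymm c).uniformContinuous_of_tendsto_cocompact
    (cobounded_eq_cocompact (α := ℂ) ▸ tendsto_sphChartSymm_cobounded c)

lemma uniformContinuous_coe_complex : UniformContinuous ((↑) : ℂ → OnePoint ℂ) :=
  continuous_coe.uniformContinuous_of_tendsto_cocompact
    (coclosedCompact_eq_cocompact (X := ℂ) ▸ tendsto_coe_infty)

lemma norm_sphChart_le_of_notMem_ball {c : ℂ} {r : ℝ} (hr : 0 < r) {u : OnePoint ℂ}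
    (hu : u ∉ ((↑) : ℂ → OnePoint ℂ) '' ball c r) : ‖sphChart c u‖ ≤ r⁻¹ := by
  induction u using OnePoint.rec with
  | infty => simpa using hr.le
  | coe v =>
    have hv : r ≤ ‖v - c‖ := by
      simpa [← dist_eq_norm] using fun h : dist v c < r => hu ⟨v, h, rfl⟩
    simpa using inv_anti₀ hr hv

lemma exists_coe_ne (u : OnePoint ℂ) : ∃ c : ℂ, u ≠ c := by
  by_contra! h
  exact zero_ne_one (coe_injective ((h 0).symm.trans (h 1)))

lemma sphChart_sphChartSymm_of_ne {c' c ζ : ℂ} (h : sphChartSymm c' ζ ≠ c) :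
    (c' - c) * ζ + 1 ≠ 0 ∧ sphChart c (sphChartSymm c' ζ) = ζ / ((c' - c) * ζ + 1) := by
  rcases eq_or_ne ζ 0 with rfl | hζ
  · simp
  have hne : c' + ζ⁻¹ - c ≠ 0 :=
    sub_ne_zero.mpr fun e => h (by rw [sphChartSymm_of_ne_zero c' hζ, e])
  have hcalc : c' + ζ⁻¹ - c = ((c' - c) * ζ + 1) / ζ := by field_simp; ring
  refine ⟨fun h0 => hne (by rw [hcalc, h0, zero_div]), ?_⟩
  rw [sphChartSymm_of_ne_zero c' hζ, sphChart_coe, hcalc, inv_div]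

/-- Holomorphy in the charts `sphChart c`, whose domains cover the sphere as `c` ranges over `ℂ`. -/
structure IsSphereHolomorphic (g : OnePoint ℂ → OnePoint ℂ) : Prop where
  continuous : Continuous g
  differentiableAt_chart {c' c ζ : ℂ} : g (sphChartSymm c' ζ) ≠ c →
    DifferentiableAt ℂ (fun ζ => sphChart c (g (sphChartSymm c' ζ))) ζ

lemma isSphereHolomorphic_id : IsSphereHolomorphic id where
  continuous := continuous_id
  differentiableAt_chart {c' c ζ} h := by
    have hev : (fun ζ => sphChart c (id (sphChartSymm c' ζ)))
        =ᶠ[𝓝 ζ] fun ζ => ζ / ((c' - c) * ζ + 1) := by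
      filter_upwards [(continuous_sphChartSymm c').continuousAt.eventually_ne h] with ζ hζ
      exact (sphChart_sphChartSymm_of_ne hζ).2
    exact hev.differentiableAt_iff.mpr
      (differentiableAt_id.div (by fun_prop) (sphChart_sphChartSymm_of_ne h).1)

lemma IsSphereHolomorphic.comp {g h : OnePoint ℂ → OnePoint ℂ} (hg : IsSphereHolomorphic g)
    (hh : IsSphereHolomorphic h) : IsSphereHolomorphic (g ∘ h) where
  continuous := hg.continuous.comp hh.continuous
  differentiableAt_chart {c' c ζ} hne := by
    obtain ⟨c'', hc''⟩ := exists_coe_ne (h (sphChartSymm c' ζ))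
    have hin := hh.differentiableAt_chart hc''
    have hout := hg.differentiableAt_chart (c' := c'') (c := c)
      (ζ := sphChart c'' (h (sphChartSymm c' ζ))) (by rwa [sphChartSymm_sphChart hc''])
    have hev : (fun ζ => sphChart c ((g ∘ h) (sphChartSymm c' ζ)))
        =ᶠ[𝓝 ζ] (fun ξ => sphChart c (g (sphChartSymm c'' ξ))) ∘
          fun ζ => sphChart c'' (h (sphChartSymm c' ζ)) := by
      filter_upwards [(hh.continuous.comp (continuous_sphChartSymm c')).continuousAt.eventually_ne
        hc''] with ζ hζ
      simp only [Function.comp_apply, sphChartSymm_sphChart (u := h (sphChartSymm c' ζ)) hζ]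
    exact hev.differentiableAt_iff.mpr (hout.comp ζ hin)

lemma IsSphereHolomorphic.iterate {g : OnePoint ℂ → OnePoint ℂ} (hg : IsSphereHolomorphic g) :
    ∀ n : ℕ, IsSphereHolomorphic g^[n]
  | 0 => isSphereHolomorphic_id
  | n + 1 => (hg.iterate n).comp hg

section RationalMap

variable {f : OnePoint ℂ → OnePoint ℂ} {P Q : ℂ[X]}

lemma differentiableAt_sphChart_of_eval_ne_zero
    (hfPQ : ∀ z : ℂ, Q.eval z ≠ 0 → f z = ((P.eval z / Q.eval z : ℂ) : OnePoint ℂ))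
    {c' c ζ : ℂ} (hζ : ζ ≠ 0) (hQζ : Q.eval (c' + ζ⁻¹) ≠ 0) (h : f (sphChartSymm c' ζ) ≠ c) :
    DifferentiableAt ℂ (fun ζ => sphChart c (f (sphChartSymm c' ζ))) ζ := by
  set R : ℂ → ℂ := fun ξ => P.eval (c' + ξ⁻¹) / Q.eval (c' + ξ⁻¹)
  have hfR : ∀ᶠ ξ in 𝓝 ζ, f (sphChartSymm c' ξ) = R ξ := by
    have hQ : ContinuousAt (fun ξ : ℂ => Q.eval (c' + ξ⁻¹)) ζ := by fun_prop (disch := exact hζ)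
    filter_upwards [isOpen_ne.mem_nhds hζ, hQ.eventually_ne hQζ] with ξ hξ hQξ
    rw [sphChartSymm_of_ne_zero c' hξ, hfPQ _ hQξ]
  have hRc : R ζ - c ≠ 0 := sub_ne_zero.mpr fun e => h (by rw [hfR.self_of_nhds, e])
  have hR : DifferentiableAt ℂ R ζ := by fun_prop (disch := assumption)
  refine (hR.sub_const c).inv hRc |>.congr_of_eventuallyEq ?_
  filter_upwards [hfR] with ξ hξ
  rw [hξ, sphChart_coe]
  rfl

lemma isSphereHolomorphic_of_eval_div (hf : Continuous f) (hQ : Q ≠ 0)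
    (hfPQ : ∀ z : ℂ, Q.eval z ≠ 0 → f z = ((P.eval z / Q.eval z : ℂ) : OnePoint ℂ)) :
    IsSphereHolomorphic f where
  continuous := hf
  differentiableAt_chart {c' c ζ₀} h := by
    set S : Set ℂ := insert 0 ((fun z => (z - c')⁻¹) '' {z | Q.IsRoot z})
    have hS : S.Finite := ((finite_setOfPred_isRoot hQ).image _).insert 0
    have hcont : Continuous fun ζ => f (sphChartSymm c' ζ) := hf.comp (continuous_sphChartSymm c')
    have hgeneric : ∀ ζ ∉ S, f (sphChartSymm c' ζ) ≠ c →
        DifferentiableAt ℂ (fun ζ => sphChart c (f (sphChartSymm c' ζ))) ζ := by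
      intro ζ hζS hζc
      refine differentiableAt_sphChart_of_eval_ne_zero hfPQ (fun h0 => hζS (h0 ▸ mem_insert _ _))
        (fun hroot => hζS (mem_insert_of_mem _ ⟨c' + ζ⁻¹, hroot, by simp⟩)) hζc
    -- `S` holds the preimages of `∞` and of the poles; these singularities are removable
    have hpunct : ∀ᶠ ζ in 𝓝[≠] ζ₀,
        DifferentiableAt ℂ (fun ζ => sphChart c (f (sphChartSymm c' ζ))) ζ := by
      filter_upwards [nhdsNE_of_nhdsNE_sdiff_finite univ_mem hS.to_subtype,
        nhdsWithin_le_nhds (hcont.continuousAt.eventually_ne h)] with ζ hζS hζc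
      exact hgeneric ζ hζS.2 hζc
    exact (Complex.analyticAt_of_differentiable_on_punctured_nhds_of_continuousAt hpunct
      ((continuousAt_sphChart h).comp_of_eq hcont.continuousAt rfl)).differentiableAt

end RationalMap

section Equicontinuity

variable {ι X Y α β : Type*} [TopologicalSpace X] [TopologicalSpace Y] [UniformSpace α]
  [UniformSpace β]

lemma UniformContinuous.comp_equicontinuousAt {g : α → β} (hg : UniformContinuous g)
    {F : ι → X → α} {x : X} (hF : EquicontinuousAt F x) :
    EquicontinuousAt (fun i => g ∘ F i) x :=
  fun _ hV => hF _ (hg hV)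

lemma EquicontinuousAt.comp_continuousAt {F : ι → Y → α} {φ : X → Y} {x : X}
    (hF : EquicontinuousAt F (φ x)) (hφ : ContinuousAt φ x) :
    EquicontinuousAt (fun i => F i ∘ φ) x :=
  fun _ hV => hφ.eventually (hF _ hV)

lemma EquicontinuousWithinAt.equicontinuousAt {F : ι → X → α} {S : Set X} {x : X}
    (hF : EquicontinuousWithinAt F S x) (hS : S ∈ 𝓝 x) : EquicontinuousAt F x :=
  fun V hV => by simpa only [nhdsWithin_eq_nhds.mpr hS] using hF V hV

lemma equicontinuousAt_of_tendstoUniformlyOn_const {F : ℕ → X → α} {s : Set X} {x : X} {p : α}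
    (hF : ∀ n, ContinuousAt (F n) x) (hs : s ∈ 𝓝 x)
    (hFp : TendstoUniformlyOn F (fun _ => p) atTop s) : EquicontinuousAt F x := by
  intro U hU
  obtain ⟨V, hV, hVsymm, hVU⟩ := comp_symm_mem_uniformity_sets hU
  obtain ⟨N, hN⟩ := eventually_atTop.mp (hFp V hV)
  have hinit : ∀ᶠ y in 𝓝 x, ∀ n < N, (F n x, F n y) ∈ U :=
    (eventually_all_finite (finite_lt_nat N)).mpr fun n _ =>
      hF n (UniformSpace.ball_mem_nhds _ hU)
  filter_upwards [hs, hinit] with y hy hyinit n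
  rcases lt_or_ge n N with hn | hn
  · exact hyinit n hn
  · exact hVU ⟨p, hVsymm.symm _ _ (hN n hn x (mem_of_mem_nhds hs)), hN n hn y hy⟩

end Equicontinuity

/-- Schwarz's lemma turns the uniform bound into a common Lipschitz bound near each point. -/
lemma equicontinuousOn_of_differentiableOn_of_norm_le {ι E : Type*} [NormedAddCommGroup E]
    [NormedSpace ℂ E] {F : ι → ℂ → E} {Ω : Set ℂ} {M : ℝ} (hΩ : IsOpen Ω)
    (hF : ∀ i, DifferentiableOn ℂ (F i) Ω) (hM : ∀ i, ∀ z ∈ Ω, ‖F i z‖ ≤ M) :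
    EquicontinuousOn F Ω := by
  intro x hx
  obtain ⟨ρ, hρ, hρΩ⟩ := Metric.isOpen_iff.mp hΩ x hx
  refine (Metric.equicontinuousAt_of_continuity_modulus (fun z => 2 * M / ρ * dist z x)
    ((continuous_const.mul (continuous_id.dist continuous_const)).tendsto' x 0 (by simp)) F
    ?_).equicontinuousWithinAt Ω
  filter_upwards [ball_mem_nhds x hρ] with z hz i
  rw [dist_comm]
  refine Complex.dist_le_div_mul_dist_of_mapsTo_ball ((hF i).mono hρΩ) (fun y hy => ?_) hz
  rw [mem_closedBall]
  linarith [dist_le_norm_add_norm (F i y) (F i x), hM i y (hρΩ hy), hM i x hx]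

lemma equicontinuousOn_of_mapsTo_compl_ball {ι : Type*} {F : ι → OnePoint ℂ → OnePoint ℂ}
    (hF : ∀ i, IsSphereHolomorphic (F i)) {U : Set (OnePoint ℂ)} (hU : IsOpen U) {c : ℂ}
    {r : ℝ} (hr : 0 < r) (hmiss : ∀ i, MapsTo (F i) U ((↑) '' ball c r)ᶜ) :
    EquicontinuousOn F U := by
  intro x hx
  obtain ⟨c', hc'⟩ := exists_coe_ne x
  have hcU : ∀ i, ∀ u ∈ U, F i u ≠ c := fun i u hu h =>
    hmiss i hu ⟨c, mem_ball_self hr, h.symm⟩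
  set G : ι → ℂ → ℂ := fun i ζ => sphChart c (F i (sphChartSymm c' ζ))
  have hΩ : IsOpen (sphChartSymm c' ⁻¹' U) := hU.preimage (continuous_sphChartSymm c')
  have hG : EquicontinuousOn G (sphChartSymm c' ⁻¹' U) :=
    equicontinuousOn_of_differentiableOn_of_norm_le hΩ
      (fun i ζ hζ => ((hF i).differentiableAt_chart (hcU i _ hζ)).differentiableWithinAt)
      (fun i ζ hζ => norm_sphChart_le_of_notMem_ball hr (hmiss i hζ))
  have hxΩ : sphChart c' x ∈ sphChartSymm c' ⁻¹' U := by
    rwa [mem_preimage, sphChartSymm_sphChart hc']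
  have hFG : EquicontinuousAt (fun i => sphChartSymm c ∘ (G i ∘ sphChart c')) x :=
    (uniformContinuous_sphChartSymm c).comp_equicontinuousAt
      (((hG _ hxΩ).equicontinuousAt (hΩ.mem_nhds hxΩ)).comp_continuousAt
        (continuousAt_sphChart hc'))
  have hrep : ∀ i, ∀ u ∈ U, u ≠ c' → sphChartSymm c (G i (sphChart c' u)) = F i u :=
    fun i u hu hu' => by
      simp only [G, sphChartSymm_sphChart hu', sphChartSymm_sphChart (hcU i u hu)]
  refine EquicontinuousAt.equicontinuousWithinAt (fun V hV => ?_) U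
  filter_upwards [hFG V hV, hU.mem_nhds hx, isOpen_ne.mem_nhds hc'] with u hu huU huc' i
  simpa only [Function.comp_apply, hrep i u huU huc', hrep i x hx hc'] using hu i

section Basin

variable {X : Type*} [TopologicalSpace X] {f : X → X} {p : X}

def basin (f : X → X) (p : X) : Set X :=
  {w | Tendsto (fun n : ℕ => f^[n] w) atTop (𝓝 p)}

lemma iterate_mem_basin_iff (n : ℕ) {w : X} : f^[n] w ∈ basin f p ↔ w ∈ basin f p := by
  show Tendsto (fun m => f^[m] (f^[n] w)) atTop (𝓝 p) ↔ Tendsto (fun m => f^[m] w) atTop (𝓝 p)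
  simp only [← Function.iterate_add_apply]
  exact tendsto_add_atTop_iff_nat (f := fun m => f^[m] w) n

lemma isOpen_basin (hf : Continuous f) {B : Set X} (hB : IsOpen B) (hpB : p ∈ B)
    (hBA : B ⊆ basin f p) : IsOpen (basin f p) := by
  have hA : basin f p = ⋃ n : ℕ, f^[n] ⁻¹' B := by
    ext w
    simp only [mem_iUnion, mem_preimage]
    exact ⟨fun h => (h.eventually (hB.mem_nhds hpB)).exists,
      fun ⟨n, hn⟩ => (iterate_mem_basin_iff n).mp (hBA hn)⟩
  rw [hA]
  exact isOpen_iUnion fun n => hB.preimage (hf.iterate n)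

lemma mapsTo_iterate_compl_closure_basin (n : ℕ) :
    MapsTo f^[n] (closure (basin f p))ᶜ (basin f p)ᶜ :=
  fun _ hw hA => hw (subset_closure ((iterate_mem_basin_iff n).mp hA))

end Basin

lemma equicontinuousOn_iterate_basin {X : Type*} [UniformSpace X] {f : X → X} {p : X}
    (hf : Continuous f) {B : Set X} (hB : IsOpen B) (hpB : p ∈ B)
    (hunif : TendstoUniformlyOn (fun n => f^[n]) (fun _ => p) atTop B) :
    EquicontinuousOn (fun n : ℕ => f^[n]) (basin f p) := by
  intro a ha
  obtain ⟨N, hN⟩ := (ha.eventually (hB.mem_nhds hpB)).exists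
  refine (equicontinuousAt_of_tendstoUniformlyOn_const (p := p)
    (fun n => (hf.iterate n).continuousAt)
    ((hB.preimage (hf.iterate N)).mem_nhds hN) fun U hU => ?_).equicontinuousWithinAt _
  filter_upwards [eventually_ge_atTop N, (tendsto_sub_atTop_nat N).eventually (hunif U hU)]
    with n hn hnU x hx
  rw [← Nat.sub_add_cancel hn, Function.iterate_add_apply]
  exact hnU _ hx

section FatouJulia

variable {f : OnePoint ℂ → OnePoint ℂ} {p : OnePoint ℂ}

lemma subset_fatouSet_of_equicontinuousOn {U : Set (OnePoint ℂ)} (hU : IsOpen U)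
    (h : EquicontinuousOn (fun n : ℕ => f^[n]) U) : U ⊆ FatouSet f :=
  fun _ hx => ⟨U, hU, hx, h⟩

lemma frontier_basin_subset_juliaSet (hA : IsOpen (basin f p)) :
    frontier (basin f p) ⊆ JuliaSet f := by
  rintro w hw ⟨U, hU, hwU, hequi⟩
  rw [hA.frontier_eq] at hw
  exact hw.2 (((hequi w hwU).equicontinuousAt (hU.mem_nhds hwU)).tendsto_of_mem_closure
    tendsto_const_nhds (fun _ hy => hy) hw.1)

lemma compl_closure_basin_subset_fatouSet (hf : IsSphereHolomorphic f) {c : ℂ} {r : ℝ}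
    (hr : 0 < r) (hBA : (↑) '' ball c r ⊆ basin f p) : (closure (basin f p))ᶜ ⊆ FatouSet f :=
  subset_fatouSet_of_equicontinuousOn isClosed_closure.isOpen_compl
    (equicontinuousOn_of_mapsTo_compl_ball hf.iterate isClosed_closure.isOpen_compl hr
      fun n => (mapsTo_iterate_compl_closure_basin n).mono_right (compl_subset_compl.mpr hBA))

end FatouJulia

lemma HasDerivAt.eventually_norm_sub_le {𝕜 F : Type*} [NontriviallyNormedField 𝕜]
    [NormedAddCommGroup F] [NormedSpace 𝕜 F] {R : 𝕜 → F} {R' : F} {z₀ : 𝕜} {k : ℝ}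
    (hR : HasDerivAt R R' z₀) (hk : ‖R'‖ < k) :
    ∀ᶠ z in 𝓝 z₀, ‖R z - R z₀‖ ≤ k * ‖z - z₀‖ := by
  filter_upwards [(hasDerivAt_iff_isLittleO.mp hR).def (sub_pos.mpr hk)] with z hz
  have h := norm_le_norm_add_norm_sub' (R z - R z₀) ((z - z₀) • R')
  rw [norm_smul] at h
  nlinarith [norm_nonneg (z - z₀)]

section Contraction

variable {X : Type*} [PseudoMetricSpace X] {R : X → X} {z₀ : X} {r k : ℝ}

lemma mapsTo_ball_of_dist_le_mul_s9 (hk : k ≤ 1)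
    (hR : ∀ z ∈ ball z₀ r, dist (R z) z₀ ≤ k * dist z z₀) : MapsTo R (ball z₀ r) (ball z₀ r) :=
  fun z hz => mem_ball.mpr <| (hR z hz).trans_lt <| by
    nlinarith [dist_nonneg (x := z) (y := z₀), mem_ball.mp hz]

lemma dist_iterate_le_of_dist_le_mul_s9 (hk0 : 0 ≤ k) (hk1 : k ≤ 1)
    (hR : ∀ z ∈ ball z₀ r, dist (R z) z₀ ≤ k * dist z z₀) {z : X} (hz : z ∈ ball z₀ r) :
    ∀ n : ℕ, dist (R^[n] z) z₀ ≤ k ^ n * dist z z₀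
  | 0 => by simp
  | n + 1 => by
    rw [Function.iterate_succ_apply', pow_succ, mul_comm _ k, mul_assoc]
    exact (hR _ ((mapsTo_ball_of_dist_le_mul_s9 hk1 hR).iterate n hz)).trans
      (mul_le_mul_of_nonneg_left (dist_iterate_le_of_dist_le_mul_s9 hk0 hk1 hR hz n) hk0)

lemma tendstoUniformlyOn_iterate_of_dist_le_mul (hk0 : 0 ≤ k) (hk1 : k < 1)
    (hR : ∀ z ∈ ball z₀ r, dist (R z) z₀ ≤ k * dist z z₀) :
    TendstoUniformlyOn (fun n => R^[n]) (fun _ => z₀) atTop (ball z₀ r) := by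
  rw [Metric.tendstoUniformlyOn_iff]
  intro ε hε
  have hpow : Tendsto (fun n : ℕ => k ^ n * r) atTop (𝓝 0) := by
    simpa using (tendsto_pow_atTop_nhds_zero_of_lt_one hk0 hk1).mul_const r
  filter_upwards [hpow.eventually (gt_mem_nhds hε)] with n hn z hz
  rw [dist_comm]
  calc dist (R^[n] z) z₀ ≤ k ^ n * dist z z₀ := dist_iterate_le_of_dist_le_mul_s9 hk0 hk1.le hR hz n
    _ ≤ k ^ n * r := mul_le_mul_of_nonneg_left (mem_ball.mp hz).le (pow_nonneg hk0 n)
    _ < ε := hn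

end Contraction

lemma iterate_apply_eq_of_semiconj_on {α β : Type*} {f : β → β} {g : α → α} {φ : α → β}
    {s : Set α} (hs : MapsTo g s s) (h : ∀ z ∈ s, f (φ z) = φ (g z)) :
    ∀ n : ℕ, ∀ z ∈ s, f^[n] (φ z) = φ (g^[n] z)
  | 0 => fun _ _ => rfl
  | n + 1 => fun z hz => by
    rw [Function.iterate_succ_apply, Function.iterate_succ_apply, h z hz,
      iterate_apply_eq_of_semiconj_on hs h n _ (hs hz)]

lemma exists_tendstoUniformlyOn_iterate_coe_ball {f : OnePoint ℂ → OnePoint ℂ} {R : ℂ → ℂ}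
    {R' z₀ : ℂ} (hRd : HasDerivAt R R' z₀) (hfix : R z₀ = z₀) (hattr : ‖R'‖ < 1)
    (hfR : ∀ᶠ z : ℂ in 𝓝 z₀, f z = R z) :
    ∃ r > 0, TendstoUniformlyOn (fun n => f^[n]) (fun _ => (z₀ : OnePoint ℂ)) atTop
      ((↑) '' ball z₀ r) := by
  obtain ⟨k, hk, hk1⟩ := exists_between hattr
  obtain ⟨r, hr, hball⟩ := Metric.eventually_nhds_iff_ball.mp
    ((hRd.eventually_norm_sub_le hk).and hfR)
  have hcontr : ∀ z ∈ ball z₀ r, dist (R z) z₀ ≤ k * dist z z₀ := fun z hz => by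
    simpa only [dist_eq_norm, hfix] using (hball z hz).1
  have hconj := iterate_apply_eq_of_semiconj_on (mapsTo_ball_of_dist_le_mul_s9 hk1.le hcontr)
    fun z hz => (hball z hz).2
  refine ⟨r, hr, fun V hV => ?_⟩
  filter_upwards [uniformContinuous_coe_complex.comp_tendstoUniformlyOn
    (tendstoUniformlyOn_iterate_of_dist_le_mul ((norm_nonneg _).trans hk.le) hk1 hcontr) V hV]
    with n hn
  rintro _ ⟨z, hz, rfl⟩
  simpa only [Function.comp_apply, hconj n z hz] using hn z hz

theorem frontier_basin_eq_juliaSet_general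
    (f : OnePoint ℂ → OnePoint ℂ)
    (P Q : Polynomial ℂ) (hf : Continuous f) (hQ : Q ≠ 0)
    (hfPQ : ∀ z : ℂ, Q.eval z ≠ 0 → f (z : OnePoint ℂ) = ((P.eval z / Q.eval z : ℂ) : OnePoint ℂ))
    (R : ℂ → ℂ) (hR : ∀ z : ℂ, R z = P.eval z / Q.eval z)
    (z₀ : ℂ) (hz₀ : Q.eval z₀ ≠ 0) (hfix : R z₀ = z₀)
    (hattr : ‖deriv R z₀‖ < 1) :
    frontier {w : OnePoint ℂ |
        Tendsto (fun n : ℕ => f^[n] w) atTop (nhds (z₀ : OnePoint ℂ))} = JuliaSet f := by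
  have hRd : HasDerivAt R (deriv R z₀) z₀ :=
    ((P.differentiableAt.div Q.differentiableAt hz₀).congr_of_eventuallyEq
      (Eventually.of_forall hR)).hasDerivAt
  have hfR : ∀ᶠ z : ℂ in 𝓝 z₀, f z = R z := by
    filter_upwards [Q.continuous.continuousAt.eventually_ne hz₀] with z hz
    rw [hR, hfPQ z hz]
  obtain ⟨r, hr, hunif⟩ := exists_tendstoUniformlyOn_iterate_coe_ball hRd hfix hattr hfR
  have hB : IsOpen ((↑) '' ball z₀ r : Set (OnePoint ℂ)) := isOpenMap_coe _ isOpen_ball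
  have hz₀B : (z₀ : OnePoint ℂ) ∈ (↑) '' ball z₀ r := mem_image_of_mem _ (mem_ball_self hr)
  have hBA : (↑) '' ball z₀ r ⊆ basin f z₀ := fun _ hx => hunif.tendsto_at hx
  have hA : IsOpen (basin f z₀) := isOpen_basin hf hB hz₀B hBA
  show frontier (basin f z₀) = JuliaSet f
  refine (frontier_basin_subset_juliaSet hA).antisymm fun w hw => ?_
  rw [hA.frontier_eq]
  exact ⟨by_contra fun hcl => hw (compl_closure_basin_subset_fatouSet
      (isSphereHolomorphic_of_eval_div hf hQ hfPQ) hr hBA hcl),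
    fun hwA => hw (subset_fatouSet_of_equicontinuousOn hA
      (equicontinuousOn_iterate_basin hf hB hz₀B hunif) hwA)⟩

theorem frontier_basin_eq_juliaSet
    (f : OnePoint ℂ → OnePoint ℂ) (d : ℕ) (hd : 2 ≤ d)
    (P Q : Polynomial ℂ) (hf : Continuous f) (hPQ : IsCoprime P Q)
    (hne : ¬(P.natDegree = 0 ∧ Q.natDegree = 0)) (hQ : Q ≠ 0)
    (hdeg : d = max P.natDegree Q.natDegree)
    (hfPQ : ∀ z : ℂ, Q.eval z ≠ 0 → f (z : OnePoint ℂ) = ((P.eval z / Q.eval z : ℂ) : OnePoint ℂ))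
    (R : ℂ → ℂ) (hR : ∀ z : ℂ, R z = P.eval z / Q.eval z)
    (z₀ : ℂ) (hz₀ : Q.eval z₀ ≠ 0) (hfix : R z₀ = z₀)
    (hattr : ‖deriv R z₀‖ < 1) :
    frontier {w : OnePoint ℂ |
        Tendsto (fun n : ℕ => f^[n] w) atTop (nhds (z₀ : OnePoint ℂ))} = JuliaSet f :=
  frontier_basin_eq_juliaSet_general f P Q hf hQ hfPQ R hR z₀ hz₀ hfix hattr
end

section
/- Let f be a rational map of the Riemann sphere of degree d ≥ 2. Then the set of critical points of f, namely {c ∈ OnePoint ℂ | f is injective on no neighborhood of c}, has at most 2d − 2 elements. -/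
open Polynomial Set Metric Filter MeasureTheory

/-!
Write `f = P / Q` with `P, Q` of degree `≤ d` and let `W = P Q' - P' Q`, which is nonzero because
`P` and `Q` are coprime and not both constant. At a finite point `z` with `W z ≠ 0`, the function
`P / Q` (or `Q / P`, at a pole) has nonzero derivative, so `f` is locally injective there by the
inverse function theorem. In the chart `w ↦ 1 / w` at `∞`, `f` is the quotient of the reflected
polynomials, whose Wronskian at `0` is `c = p_d q_{d-1} - p_{d-1} q_d`. So the critical points lie
among the roots of `W`, together with `∞` if `c = 0`. Finally `R = q_d P - p_d Q` has degree
`< d`, and `< d - 1` if `c = 0`, while `W(R, Q) = q_d W(P, Q)` and `W(R, P) = p_d W(P, Q)`; hence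
`deg W ≤ 2d - 2`, and `deg W ≤ 2d - 3` if `c = 0`.
-/

open Topology OnePoint Function

namespace Polynomial

theorem coeff_ne_zero_or_of_max_natDegree_eq {R : Type*} [Semiring R] {P Q : R[X]} {n : ℕ}
    (h : max P.natDegree Q.natDegree = n + 1) : P.coeff (n + 1) ≠ 0 ∨ Q.coeff (n + 1) ≠ 0 := by
  rcases max_choice P.natDegree Q.natDegree with hP | hQ
  · left
    rw [← h, hP, coeff_natDegree, leadingCoeff_ne_zero]
    exact ne_zero_of_natDegree_gt (n := 0) (by omega)
  · right
    rw [← h, hQ, coeff_natDegree, leadingCoeff_ne_zero]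
    exact ne_zero_of_natDegree_gt (n := 0) (by omega)

variable {K : Type*} [Field K]

theorem eval_reflect_mul_inv_pow {P : K[X]} {n : ℕ} (hP : P.natDegree ≤ n) {w : K}
    (hw : w ≠ 0) : (reflect n P).eval w * w⁻¹ ^ n = P.eval w⁻¹ := by
  have := invertibleOfNonzero (inv_ne_zero hw)
  simpa [invOf_eq_inv, eval₂_id] using eval₂_reflect_mul_pow (RingHom.id K) w⁻¹ n P hP

theorem wronskian_ne_zero_of_isCoprime [CharZero K] {P Q : K[X]} (hPQ : IsCoprime P Q)
    (hPQ₀ : ¬(P.natDegree = 0 ∧ Q.natDegree = 0)) : wronskian P Q ≠ 0 := by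
  rw [Ne, hPQ.wronskian_eq_zero_iff]
  exact fun h ↦ hPQ₀ ⟨derivative_eq_zero.1 h.1, derivative_eq_zero.1 h.2⟩

theorem wronskian_smul_sub_smul_snd (a b : K) (P Q : K[X]) :
    wronskian (b • P - a • Q) Q = b • wronskian P Q := by
  simp only [wronskian, derivative_sub, smul_eq_C_mul, derivative_C_mul]
  ring

theorem wronskian_smul_sub_smul_fst (a b : K) (P Q : K[X]) :
    wronskian (b • P - a • Q) P = a • wronskian P Q := by
  simp only [wronskian, derivative_sub, smul_eq_C_mul, derivative_C_mul]
  ring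

theorem natDegree_wronskian_lt_natDegree_add {P Q : K[X]} {n : ℕ} (hP : P.natDegree ≤ n)
    (hQ : Q.natDegree ≤ n) (hPQ : P.coeff n ≠ 0 ∨ Q.coeff n ≠ 0) (hW : wronskian P Q ≠ 0) :
    (wronskian P Q).natDegree < (Q.coeff n • P - P.coeff n • Q).natDegree + n := by
  set R := Q.coeff n • P - P.coeff n • Q
  rcases hPQ with ha | hb
  · have hRP : wronskian R P = P.coeff n • wronskian P Q := wronskian_smul_sub_smul_fst ..
    calc (wronskian P Q).natDegree = (wronskian R P).natDegree := by rw [hRP, natDegree_smul _ ha]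
      _ < R.natDegree + P.natDegree :=
        natDegree_wronskian_lt_add (by rw [hRP]; exact smul_ne_zero ha hW)
      _ ≤ R.natDegree + n := by omega
  · have hRQ : wronskian R Q = Q.coeff n • wronskian P Q := wronskian_smul_sub_smul_snd ..
    calc (wronskian P Q).natDegree = (wronskian R Q).natDegree := by rw [hRQ, natDegree_smul _ hb]
      _ < R.natDegree + Q.natDegree :=
        natDegree_wronskian_lt_add (by rw [hRQ]; exact smul_ne_zero hb hW)
      _ ≤ R.natDegree + n := by omega

theorem natDegree_smul_sub_smul_le {P Q : K[X]} {n : ℕ} (hP : P.natDegree ≤ n + 1)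
    (hQ : Q.natDegree ≤ n + 1) :
    (Q.coeff (n + 1) • P - P.coeff (n + 1) • Q).natDegree ≤ n := by
  refine natDegree_le_pred (n := n + 1) ((natDegree_sub_le _ _).trans (max_le ?_ ?_)) ?_
  · exact (natDegree_smul_le _ _).trans hP
  · exact (natDegree_smul_le _ _).trans hQ
  · simp [mul_comm]

theorem natDegree_wronskian_le {P Q : K[X]} {n : ℕ} (hP : P.natDegree ≤ n + 1)
    (hQ : Q.natDegree ≤ n + 1) (hPQ : P.coeff (n + 1) ≠ 0 ∨ Q.coeff (n + 1) ≠ 0)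
    (hW : wronskian P Q ≠ 0) : (wronskian P Q).natDegree ≤ 2 * n := by
  have := natDegree_wronskian_lt_natDegree_add hP hQ hPQ hW
  have := natDegree_smul_sub_smul_le hP hQ
  omega

theorem eval_zero_wronskian_reflect (P Q : K[X]) (n : ℕ) :
    (wronskian (reflect (n + 1) P) (reflect (n + 1) Q)).eval 0 =
      P.coeff (n + 1) * Q.coeff n - P.coeff n * Q.coeff (n + 1) := by
  simp [wronskian, ← coeff_zero_eq_eval_zero, coeff_derivative, coeff_reflect, revAt_le]

theorem natDegree_wronskian_lt {P Q : K[X]} {n : ℕ} (hn : n ≠ 0) (hP : P.natDegree ≤ n + 1)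
    (hQ : Q.natDegree ≤ n + 1) (hPQ : P.coeff (n + 1) ≠ 0 ∨ Q.coeff (n + 1) ≠ 0)
    (hW : wronskian P Q ≠ 0)
    (hW₀ : (wronskian (reflect (n + 1) P) (reflect (n + 1) Q)).eval 0 = 0) :
    (wronskian P Q).natDegree < 2 * n := by
  have := natDegree_wronskian_lt_natDegree_add hP hQ hPQ hW
  have := natDegree_le_pred (natDegree_smul_sub_smul_le hP hQ) <| by
    rw [eval_zero_wronskian_reflect] at hW₀
    simp only [coeff_sub, coeff_smul, smul_eq_mul]
    linear_combination -hW₀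
  omega

end Polynomial

def criticalPoints {X Y : Type*} [TopologicalSpace X] (f : X → Y) : Set X :=
  {c | ∀ V ∈ 𝓝 c, ¬InjOn f V}

section LocalInjectivity

variable {𝕜 : Type*} [NontriviallyNormedField 𝕜]

theorem HasStrictDerivAt.exists_injOn [CompleteSpace 𝕜] {h : 𝕜 → 𝕜} {h' z : 𝕜}
    (hh : HasStrictDerivAt h h' z) (hh' : h' ≠ 0) : ∃ U ∈ 𝓝 z, InjOn h U := by
  obtain ⟨U, hU, hinv⟩ := (hh.hasStrictFDerivAt_equiv hh').eventually_left_inverse.exists_mem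
  exact ⟨U, hU, fun x hx y hy hxy ↦ by rw [← hinv x hx, ← hinv y hy, hxy]⟩

theorem exists_injOn_of_eventuallyEq_nhdsNE [CompleteSpace 𝕜] {Y : Type*} [TopologicalSpace Y]
    [T2Space Y] {g ψ : 𝕜 → Y} {h : 𝕜 → 𝕜} {h' z : 𝕜} (hψ : Injective ψ)
    (hh : HasStrictDerivAt h h' z) (hh' : h' ≠ 0) (hg : ContinuousAt g z)
    (hψh : ContinuousAt (ψ ∘ h) z) (hgψh : g =ᶠ[𝓝[≠] z] ψ ∘ h) : ∃ U ∈ 𝓝 z, InjOn g U := by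
  obtain ⟨U, hU, hinj⟩ := hh.exists_injOn hh'
  obtain ⟨V, hV, hgV⟩ := ((hg.eventuallyEq_nhds_iff_eventuallyEq_nhdsNE hψh).1 hgψh).exists_mem
  refine ⟨U ∩ V, inter_mem hU hV, fun x hx y hy hxy ↦ hinj hx.1 hy.1 (hψ ?_)⟩
  rw [← comp_apply (f := ψ), ← hgV hx.2, hxy, hgV hy.2, comp_apply]

namespace OnePoint

open scoped Classical in
noncomputable def invCoe (w : 𝕜) : OnePoint 𝕜 := if w = 0 then ∞ else ↑w⁻¹

@[simp]
theorem invCoe_zero : invCoe (0 : 𝕜) = ∞ := if_pos rfl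

theorem invCoe_of_ne_zero {w : 𝕜} (hw : w ≠ 0) : invCoe w = ↑w⁻¹ := if_neg hw

theorem invCoe_injective : Injective (invCoe : 𝕜 → OnePoint 𝕜) := by
  intro w w' h
  rcases eq_or_ne w 0 with rfl | hw <;> rcases eq_or_ne w' 0 with rfl | hw'
  · rfl
  · simp [invCoe_of_ne_zero hw'] at h
  · simp [invCoe_of_ne_zero hw] at h
  · simpa [invCoe_of_ne_zero hw, invCoe_of_ne_zero hw'] using h

theorem map_invCoe_nhds_zero [ProperSpace 𝕜] : map invCoe (𝓝 (0 : 𝕜)) = 𝓝 ∞ := by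
  have hne : map invCoe (𝓝[≠] (0 : 𝕜)) = map (↑) (coclosedCompact 𝕜) := by
    rw [coclosedCompact_eq_cocompact, ← cobounded_eq_cocompact, ← inv_nhdsNE_zero,
      ← Filter.map_inv, map_map]
    exact map_congr (eventually_nhdsWithin_of_forall fun w hw ↦ invCoe_of_ne_zero hw)
  rw [← nhdsNE_sup_pure, Filter.map_sup, hne, map_pure, invCoe_zero, nhds_infty_eq]

theorem encard_image_coe_rootSet_le (p : 𝕜[X]) :
    ((↑) '' p.rootSet 𝕜 : Set (OnePoint 𝕜)).encard ≤ p.natDegree := by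
  rw [coe_injective.encard_image, ← (p.rootSet_finite 𝕜).cast_ncard_eq]
  exact_mod_cast p.ncard_rootSet_le 𝕜

end OnePoint

variable [ProperSpace 𝕜]

theorem exists_injOn_of_eval_wronskian_ne_zero {g : 𝕜 → OnePoint 𝕜} {A B : 𝕜[X]} {z : 𝕜}
    (hg : ContinuousAt g z) (hB : B ≠ 0) (hAB : A.eval z ≠ 0 ∨ B.eval z ≠ 0)
    (hgAB : ∀ w ≠ z, B.eval w ≠ 0 → g w = ↑(A.eval w / B.eval w))
    (hW : (wronskian A B).eval z ≠ 0) : ∃ U ∈ 𝓝 z, InjOn g U := by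
  have hBw : ∀ᶠ w in 𝓝[≠] z, w ≠ z ∧ B.eval w ≠ 0 :=
    Filter.mem_of_superset (nhdsNE_of_nhdsNE_sdiff_finite self_mem_nhdsWithin
      (B.finite_setOfPred_isRoot hB)) fun w hw ↦ ⟨hw.1, hw.2⟩
  have hW' : (wronskian A B).eval z = A.eval z * B.derivative.eval z -
      A.derivative.eval z * B.eval z := by simp [wronskian]
  by_cases hBz : B.eval z = 0
  · have hAz : A.eval z ≠ 0 := hAB.resolve_right (not_not.2 hBz)
    refine exists_injOn_of_eventuallyEq_nhdsNE invCoe_injective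
      ((B.hasStrictDerivAt z).div (A.hasStrictDerivAt z) hAz) ?_ hg ?_ ?_
    · rw [hW', hBz] at hW
      rw [hBz]
      exact div_ne_zero (by simpa [mul_comm] using hW) (pow_ne_zero _ hAz)
    · refine ContinuousAt.comp (g := invCoe) ?_ (B.continuousAt.div A.continuousAt hAz)
      rw [Pi.div_apply, hBz, zero_div, ContinuousAt, invCoe_zero, ← map_invCoe_nhds_zero]
      exact tendsto_map
    · filter_upwards [hBw, (A.continuousAt.eventually_ne hAz).filter_mono nhdsWithin_le_nhds]
        with w ⟨hwz, hBw⟩ hAw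
      rw [hgAB w hwz hBw, comp_apply, Pi.div_apply, invCoe_of_ne_zero (div_ne_zero hBw hAw),
        inv_div]
  · refine exists_injOn_of_eventuallyEq_nhdsNE coe_injective
      ((A.hasStrictDerivAt z).div (B.hasStrictDerivAt z) hBz) ?_ hg ?_ ?_
    · refine div_ne_zero (fun h ↦ hW ?_) (pow_ne_zero _ hBz)
      rw [hW']
      linear_combination -h
    · exact continuous_coe.continuousAt.comp (A.continuousAt.div B.continuousAt hBz)
    · filter_upwards [hBw] with w ⟨hwz, hBw⟩
      exact hgAB w hwz hBw

variable {f : OnePoint 𝕜 → OnePoint 𝕜} {P Q : 𝕜[X]}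

theorem coe_notMem_criticalPoints (hf : Continuous f) (hQ : Q ≠ 0) (hPQ : IsCoprime P Q)
    (hfPQ : ∀ z : 𝕜, Q.eval z ≠ 0 → f z = ↑(P.eval z / Q.eval z)) {z : 𝕜}
    (hW : (wronskian P Q).eval z ≠ 0) : (z : OnePoint 𝕜) ∉ criticalPoints f := by
  obtain ⟨U, hU, hinj⟩ := exists_injOn_of_eval_wronskian_ne_zero (g := f ∘ (↑))
    (hf.continuousAt.comp continuous_coe.continuousAt) hQ
    (hPQ.map (evalRingHom z)).ne_zero_or_ne_zero (fun w _ hw ↦ hfPQ w hw) hW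
  exact fun hz ↦ hz _ (isOpenMap_coe.image_mem_nhds hU) hinj.image_of_comp

theorem infty_notMem_criticalPoints (hf : Continuous f) (hQ : Q ≠ 0) {n : ℕ}
    (hP : P.natDegree ≤ n) (hQn : Q.natDegree ≤ n) (hPQ : P.coeff n ≠ 0 ∨ Q.coeff n ≠ 0)
    (hfPQ : ∀ z : 𝕜, Q.eval z ≠ 0 → f z = ↑(P.eval z / Q.eval z))
    (hW : (wronskian (reflect n P) (reflect n Q)).eval 0 ≠ 0) : ∞ ∉ criticalPoints f := by
  have hcont : ContinuousAt (f ∘ invCoe) 0 := by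
    refine hf.continuousAt.comp (x := (0 : 𝕜)) ?_
    rw [ContinuousAt, invCoe_zero, ← map_invCoe_nhds_zero]
    exact tendsto_map
  have hfAB : ∀ w ≠ 0, (reflect n Q).eval w ≠ 0 →
      (f ∘ invCoe) w = ↑((reflect n P).eval w / (reflect n Q).eval w) := by
    intro w hw hBw
    have hQw : Q.eval w⁻¹ ≠ 0 := by
      rw [← eval_reflect_mul_inv_pow hQn hw]
      exact mul_ne_zero hBw (pow_ne_zero _ (inv_ne_zero hw))
    rw [comp_apply, invCoe_of_ne_zero hw, hfPQ _ hQw, ← eval_reflect_mul_inv_pow hP hw,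
      ← eval_reflect_mul_inv_pow hQn hw, mul_div_mul_right _ _ (pow_ne_zero _ (inv_ne_zero hw))]
  obtain ⟨U, hU, hinj⟩ := exists_injOn_of_eval_wronskian_ne_zero hcont
    (reflect_eq_zero_iff.not.2 hQ) (by simpa [← coeff_zero_eq_eval_zero, coeff_reflect] using hPQ)
    hfAB hW
  exact fun h ↦ h _ (map_invCoe_nhds_zero (𝕜 := 𝕜) ▸ image_mem_map hU) hinj.image_of_comp

theorem criticalPoints_subset (hf : Continuous f) (hQ : Q ≠ 0) (hPQ : IsCoprime P Q)
    (hW : wronskian P Q ≠ 0) (hfPQ : ∀ z : 𝕜, Q.eval z ≠ 0 → f z = ↑(P.eval z / Q.eval z)) :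
    criticalPoints f ⊆ insert ∞ ((↑) '' (wronskian P Q).rootSet 𝕜) := by
  intro c hc
  induction c using OnePoint.rec with
  | infty => exact mem_insert _ _
  | coe z =>
    refine mem_insert_of_mem _ (mem_image_of_mem _ ?_)
    rw [mem_rootSet_of_ne hW, coe_aeval_eq_eval]
    by_contra hz
    exact coe_notMem_criticalPoints hf hQ hPQ hfPQ hz hc

end LocalInjectivity

theorem encard_criticalPoints_le
    (f : OnePoint ℂ → OnePoint ℂ) (d : ℕ) (hd : 2 ≤ d) (hf : IsRationalMap f d) :
    {c : OnePoint ℂ | ∀ V ∈ nhds c, ¬ Set.InjOn f V}.encard ≤ (2 * d - 2 : ℕ) := by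
  obtain ⟨hfc, P, Q, hPQ, hPQ₀, hQ, rfl, hfPQ⟩ := hf
  obtain ⟨n, hn⟩ : ∃ n, max P.natDegree Q.natDegree = n + 1 :=
    ⟨_, (Nat.sub_add_cancel (by omega)).symm⟩
  have hP : P.natDegree ≤ n + 1 := hn ▸ le_max_left _ _
  have hQn : Q.natDegree ≤ n + 1 := hn ▸ le_max_right _ _
  have hlead := coeff_ne_zero_or_of_max_natDegree_eq hn
  have hW := wronskian_ne_zero_of_isCoprime hPQ hPQ₀
  have hcrit := criticalPoints_subset hfc hQ hPQ hW hfPQ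
  rw [hn, show 2 * (n + 1) - 2 = 2 * n by omega]
  by_cases hinfty : (wronskian (reflect (n + 1) P) (reflect (n + 1) Q)).eval 0 = 0
  · calc (criticalPoints f).encard
        ≤ (insert ∞ ((↑) '' (wronskian P Q).rootSet ℂ)).encard := encard_mono hcrit
      _ ≤ (wronskian P Q).natDegree + 1 :=
        (encard_insert_le _ _).trans (by gcongr; exact encard_image_coe_rootSet_le _)
      _ ≤ (2 * n : ℕ) := by
        exact_mod_cast natDegree_wronskian_lt (by omega) hP hQn hlead hW hinfty
  · have hcrit' : criticalPoints f ⊆ (↑) '' (wronskian P Q).rootSet ℂ := fun c hc ↦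
      (hcrit hc).resolve_left fun h ↦
        infty_notMem_criticalPoints hfc hQ hP hQn hlead hfPQ hinfty (h ▸ hc)
    calc (criticalPoints f).encard
        ≤ (wronskian P Q).natDegree := (encard_mono hcrit').trans (encard_image_coe_rootSet_le _)
      _ ≤ (2 * n : ℕ) := by exact_mod_cast natDegree_wronskian_le hP hQn hlead hW
end

section
/- (Hölder continuity of the Cauchy-type operator P) Fix a real number p > 2. There exists a constant K_p > 0, depending only on p, such that for every measurable function h : ℂ → ℂ with finite L^p norm ‖h‖_p with respect to Lebesgue (volume) measure on ℂ, the function Ph defined by Ph(ζ) = −(1/π) ∫_ℂ h(z) (1/(z − ζ) − 1/z) dA(z) satisfies, for all ζ₁, ζ₂ ∈ ℂ, the Hölder estimate |Ph(ζ₁) − Ph(ζ₂)| ≤ K_p ‖h‖_p |ζ₁ − ζ₂|^{1 − 2/p}; in particular the defining integral converges absolutely for every ζ ∈ ℂ. -/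
/-!
Let `q = p / (p - 1)`, so that `1 < q < 2`. By Hölder's inequality, `|Ph(ζ₁) - Ph(ζ₂)|` is at
most `π⁻¹ ‖h‖_p` times the `L^q` norm of the kernel `(z - ζ₁)⁻¹ - (z - ζ₂)⁻¹`. The substitution
`z = ζ₂ + (ζ₁ - ζ₂) w` turns this kernel into `(ζ₁ - ζ₂)⁻¹ ((w - 1)⁻¹ - w⁻¹)` and `dA(z)` into
`|ζ₁ - ζ₂|² dA(w)`, so its `L^q` norm is `|ζ₁ - ζ₂| ^ (2/q - 1) = |ζ₁ - ζ₂| ^ (1 - 2/p)` times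
the `L^q` norm of `(w - 1)⁻¹ - w⁻¹`. The latter is finite: on `|w| < 2` the function is bounded
by `|w - 1|⁻¹ + |w|⁻¹`, which is `q`-integrable there since `q < 2`, and on `|w| ≥ 2` by
`2 |w|⁻²`, which is `q`-integrable there since `2q > 2`.
-/

open Polynomial Set Metric Filter MeasureTheory
open Module

section PowerDecay

variable {E : Type*} [NormedAddCommGroup E] [MeasurableSpace E] [BorelSpace E] {μ : Measure E}

lemma memLp_norm_rpow_neg_of_integrableOn {s : Set E} {α q : ℝ} (hq : 0 < q)
    (h : IntegrableOn (fun x : E => ‖x‖ ^ (-(α * q))) s μ) :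
    MemLp (fun x : E => ‖x‖ ^ (-α)) (ENNReal.ofReal q) (μ.restrict s) := by
  rw [← integrable_norm_rpow_iff (measurable_norm.pow_const _).aestronglyMeasurable
    (by simpa using hq) ENNReal.ofReal_ne_top, ENNReal.toReal_ofReal hq.le]
  refine h.congr_fun_ae (.of_forall fun x => ?_)
  dsimp only
  rw [Real.norm_of_nonneg (Real.rpow_nonneg (norm_nonneg x) _), ← Real.rpow_mul (norm_nonneg x),
    neg_mul]

variable [NormedSpace ℝ E] [FiniteDimensional ℝ E] [μ.IsAddHaarMeasure]

lemma integrableOn_ball_norm_rpow_neg (hd : 1 ≤ finrank ℝ E) {β : ℝ} (hβ : β < finrank ℝ E)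
    (r : ℝ) : IntegrableOn (fun x : E => ‖x‖ ^ (-β)) (ball 0 r) μ :=
  integrableOn_ball_of_norm_le_rpow (C := 1) hd hβ
    (ae_of_all _ fun x => by simp [abs_of_nonneg (Real.rpow_nonneg (norm_nonneg x) _)])
    (measurable_norm.pow_const _).aestronglyMeasurable

lemma integrableOn_compl_ball_norm_rpow_neg (hd : 1 ≤ finrank ℝ E) {β r : ℝ}
    (hβ : finrank ℝ E < β) (hr : 0 < r) :
    IntegrableOn (fun x : E => ‖x‖ ^ (-β)) (ball 0 r)ᶜ μ := by
  have : Nontrivial E := Module.nontrivial_of_finrank_pos (R := ℝ) (by omega)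
  have hradial : IntegrableOn (fun y : ℝ => y ^ (finrank ℝ E - 1) • (Ici r).indicator
      (fun y => y ^ (-β)) y) (Ioi 0) := by
    have hpow : IntegrableOn (fun y : ℝ => y ^ ((finrank ℝ E : ℝ) - 1 - β)) (Ici r) :=
      (integrableOn_Ici_iff_integrableOn_Ioi).mpr (integrableOn_Ioi_rpow_of_lt (by linarith) hr)
    refine ((integrable_indicator_iff measurableSet_Ici).mpr hpow).integrableOn.congr_fun
      (fun y (hy : 0 < y) => ?_) measurableSet_Ioi
    by_cases hyr : y ∈ Ici r
    · simp only [indicator_of_mem hyr, smul_eq_mul]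
      rw [← Real.rpow_natCast, ← Real.rpow_add hy, Nat.cast_sub hd]
      ring_nf
    · simp [indicator_of_notMem hyr]
  rw [← integrable_fun_norm_addHaar μ] at hradial
  refine hradial.integrableOn.congr_fun (fun x hx => ?_) measurableSet_ball.compl
  simp_all [indicator_of_mem]

end PowerDecay

lemma norm_integral_mul_le_eLpNorm_mul_eLpNorm {α 𝕜 : Type*} [MeasurableSpace α] {μ : Measure α}
    [NormedRing 𝕜] [NormedSpace ℝ 𝕜] {p q : ENNReal} [p.HolderConjugate q] {f g : α → 𝕜}
    (hf : MemLp f p μ) (hg : MemLp g q μ) :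
    ‖∫ x, f x * g x ∂μ‖ ≤ (eLpNorm f p μ).toReal * (eLpNorm g q μ).toReal := by
  calc ‖∫ x, f x * g x ∂μ‖ ≤ (∫⁻ x, ENNReal.ofReal ‖f x * g x‖ ∂μ).toReal :=
        norm_integral_le_lintegral_norm _
    _ = (eLpNorm (f • g) 1 μ).toReal := by
        simp_rw [eLpNorm_one_eq_lintegral_enorm, ofReal_norm]
        rfl
    _ ≤ (eLpNorm f p μ * eLpNorm g q μ).toReal :=
        ENNReal.toReal_mono (ENNReal.mul_ne_top hf.2.ne hg.2.ne)
          (eLpNorm_smul_le_mul_eLpNorm hg.1 hf.1)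
    _ = (eLpNorm f p μ).toReal * (eLpNorm g q μ).toReal := ENNReal.toReal_mul

lemma memLp_inv_restrict_ball {q : ℝ} (hq0 : 0 < q) (hq2 : q < 2) (r : ℝ) :
    MemLp (fun w : ℂ => w⁻¹) (ENNReal.ofReal q) (volume.restrict (ball 0 r)) := by
  refine (memLp_norm_iff measurable_inv.aestronglyMeasurable).mp ?_
  simpa [Real.rpow_neg_one] using memLp_norm_rpow_neg_of_integrableOn (α := 1) hq0
    (integrableOn_ball_norm_rpow_neg (by simp) (by simpa using hq2) r)

lemma norm_inv_sub_one_sub_inv_le {w : ℂ} (hw : 2 ≤ ‖w‖) :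
    ‖(w - 1)⁻¹ - w⁻¹‖ ≤ 2 * ‖w‖ ^ (-2 : ℝ) := by
  have hw0 : 0 < ‖w‖ := by linarith
  have hw1 : ‖w‖ / 2 ≤ ‖w - 1‖ := by linarith [norm_sub_norm_le w 1, norm_one (α := ℂ)]
  rw [inv_sub_inv (norm_pos_iff.mp (by linarith)) (norm_pos_iff.mp hw0), sub_sub_cancel,
    norm_div, norm_one, norm_mul, Real.rpow_neg hw0.le, Real.rpow_two, one_div]
  calc (‖w - 1‖ * ‖w‖)⁻¹ ≤ (‖w‖ / 2 * ‖w‖)⁻¹ := by gcongr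
    _ = 2 * (‖w‖ ^ 2)⁻¹ := by field_simp

lemma memLp_inv_sub_one_sub_inv {q : ℝ} (hq1 : 1 < q) (hq2 : q < 2) :
    MemLp (fun w : ℂ => (w - 1)⁻¹ - w⁻¹) (ENNReal.ofReal q) volume := by
  have hmeas : Measurable fun w : ℂ => (w - 1)⁻¹ - w⁻¹ := by fun_prop
  set s := ball (0 : ℂ) 2
  have hinv : MemLp ((ball (0 : ℂ) 3).indicator fun w => w⁻¹) (ENNReal.ofReal q) volume :=
    (memLp_indicator_iff_restrict measurableSet_ball).mpr
      (memLp_inv_restrict_ball (by linarith) hq2 3)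
  have hnear : MemLp (s.indicator fun w : ℂ => (w - 1)⁻¹ - w⁻¹) (ENNReal.ofReal q) volume := by
    have heq : (s.indicator fun w : ℂ => (w - 1)⁻¹ - w⁻¹) =
        s.indicator (((ball (0 : ℂ) 3).indicator fun w => w⁻¹) ∘ (· - 1) -
          (ball (0 : ℂ) 3).indicator fun w => w⁻¹) := by
      refine indicator_congr fun w (hw : w ∈ s) => ?_
      rw [mem_ball_zero_iff] at hw
      have hw3 : w ∈ ball (0 : ℂ) 3 := mem_ball_zero_iff.mpr (by linarith)
      have hw13 : w - 1 ∈ ball (0 : ℂ) 3 :=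
        mem_ball_zero_iff.mpr ((norm_sub_le _ _).trans_lt (by rw [norm_one]; linarith))
      simp [indicator_of_mem hw3, indicator_of_mem hw13]
    rw [heq]
    exact ((hinv.comp_measurePreserving (measurePreserving_sub_right volume 1)).sub
      hinv).indicator measurableSet_ball
  have hfar : MemLp (sᶜ.indicator fun w : ℂ => (w - 1)⁻¹ - w⁻¹) (ENNReal.ofReal q) volume := by
    rw [memLp_indicator_iff_restrict measurableSet_ball.compl]
    refine (memLp_norm_rpow_neg_of_integrableOn (α := 2) (by linarith)
      (integrableOn_compl_ball_norm_rpow_neg (by simp) (by simp; linarith) two_pos)).of_le_mul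
      (c := 2) hmeas.aestronglyMeasurable ?_
    filter_upwards [ae_restrict_mem measurableSet_ball.compl] with w hw
    rw [Real.norm_of_nonneg (Real.rpow_nonneg (norm_nonneg w) _)]
    exact norm_inv_sub_one_sub_inv_le (by simpa [s] using hw)
  simpa only [indicator_self_add_compl] using hnear.add hfar

lemma Complex.map_volume_sub_div (b : ℂ) {c : ℂ} (hc : c ≠ 0) :
    Measure.map (fun z : ℂ => (z - b) / c) volume = ENNReal.ofReal (‖c‖ ^ 2) • volume := by
  have hdet : LinearMap.det (LinearMap.mulLeft ℝ c⁻¹) = (‖c‖ ^ 2)⁻¹ := by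
    rw [Complex.sq_norm, ← Complex.normSq_inv, ← Algebra.norm_complex_apply,
      Algebra.norm_apply]
    rfl
  have hcomp : (fun z : ℂ => (z - b) / c) = LinearMap.mulLeft ℝ c⁻¹ ∘ fun z => z - b := by
    ext1 z; simp [div_eq_inv_mul]
  rw [hcomp, ← Measure.map_map (LinearMap.mulLeft ℝ c⁻¹).continuous_of_finiteDimensional.measurable
    (measurable_sub_const b), map_sub_right_eq_self,
    Measure.map_linearMap_addHaar_eq_smul_addHaar _ (by simp [hdet, hc]), hdet, inv_inv,
    abs_of_nonneg (by positivity)]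

lemma Complex.eLpNorm_comp_sub_div {E : Type*} [NormedAddCommGroup E] (F : ℂ → E)
    (p : ENNReal) (b : ℂ) {c : ℂ} (hc : c ≠ 0) :
    eLpNorm (fun z => F ((z - b) / c)) p volume =
      ENNReal.ofReal (‖c‖ ^ 2) ^ (1 / p).toReal * eLpNorm F p volume := by
  have hemb : MeasurableEmbedding fun z : ℂ => (z - b) / c :=
    ((Homeomorph.subRight b).trans (Homeomorph.mulRight₀ c⁻¹ (inv_ne_zero hc))).measurableEmbedding
  rw [← Function.comp_def, ← hemb.eLpNorm_map_measure, Complex.map_volume_sub_div b hc,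
    eLpNorm_smul_measure_of_ne_zero (by simpa using hc), smul_eq_mul]

lemma inv_sub_sub_inv_sub_eq {𝕜 : Type*} [Field 𝕜] (z : 𝕜) {a b : 𝕜} (hab : a - b ≠ 0) :
    (z - a)⁻¹ - (z - b)⁻¹ = (a - b)⁻¹ * (((z - b) / (a - b) - 1)⁻¹ - ((z - b) / (a - b))⁻¹) := by
  rw [div_sub_one hab, sub_sub_sub_cancel_right, inv_div, inv_div, mul_sub, div_eq_mul_inv,
    div_eq_mul_inv, inv_mul_cancel_left₀ hab, inv_mul_cancel_left₀ hab]

lemma eLpNorm_inv_sub_sub_inv_sub {q : ℝ} (hq : 0 < q) {a b : ℂ} (hab : a ≠ b) :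
    eLpNorm (fun z : ℂ => (z - a)⁻¹ - (z - b)⁻¹) (ENNReal.ofReal q) volume =
      ENNReal.ofReal (‖a - b‖ ^ (2 / q - 1)) *
        eLpNorm (fun w : ℂ => (w - 1)⁻¹ - w⁻¹) (ENNReal.ofReal q) volume := by
  have hab' : a - b ≠ 0 := sub_ne_zero.mpr hab
  have hnorm : 0 < ‖a - b‖ := norm_pos_iff.mpr hab'
  have hrescale : (fun z : ℂ => (z - a)⁻¹ - (z - b)⁻¹) =
      (a - b)⁻¹ • fun z => ((z - b) / (a - b) - 1)⁻¹ - ((z - b) / (a - b))⁻¹ :=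
    funext fun z => inv_sub_sub_inv_sub_eq z hab'
  rw [hrescale, eLpNorm_const_smul,
    Complex.eLpNorm_comp_sub_div (fun w : ℂ => (w - 1)⁻¹ - w⁻¹) _ b hab', ← mul_assoc]
  congr 1
  rw [one_div, ENNReal.toReal_inv, ENNReal.toReal_ofReal hq.le, ← ofReal_norm,
    ENNReal.ofReal_rpow_of_nonneg (by positivity) (by positivity),
    ← ENNReal.ofReal_mul (by positivity), norm_inv, ← Real.rpow_natCast, ← Real.rpow_mul hnorm.le,
    Real.rpow_sub hnorm, Real.rpow_one, Nat.cast_ofNat, ← div_eq_mul_inv, inv_mul_eq_div]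

lemma memLp_inv_sub_sub_inv_sub {q : ℝ} (hq1 : 1 < q) (hq2 : q < 2) (a b : ℂ) :
    MemLp (fun z : ℂ => (z - a)⁻¹ - (z - b)⁻¹) (ENNReal.ofReal q) volume := by
  refine ⟨by fun_prop, ?_⟩
  rcases eq_or_ne a b with rfl | hab
  · simp
  rw [eLpNorm_inv_sub_sub_inv_sub (by linarith) hab]
  exact ENNReal.mul_lt_top ENNReal.ofReal_lt_top (memLp_inv_sub_one_sub_inv hq1 hq2).2

lemma norm_integral_mul_inv_sub_sub_inv_sub_le {p q : ℝ} (hpq : p.HolderConjugate q) (hq2 : q < 2)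
    {h : ℂ → ℂ} (hh : MemLp h (ENNReal.ofReal p) volume) (a b : ℂ) :
    ‖∫ z : ℂ, h z * ((z - a)⁻¹ - (z - b)⁻¹)‖ ≤
      (eLpNorm (fun w : ℂ => (w - 1)⁻¹ - w⁻¹) (ENNReal.ofReal q) volume).toReal *
        (eLpNorm h (ENNReal.ofReal p) volume).toReal * ‖a - b‖ ^ (2 / q - 1) := by
  have hq1 : 1 < q := hpq.symm.lt
  rcases eq_or_ne a b with rfl | hab
  · simp only [sub_self, mul_zero, integral_zero, norm_zero]
    positivity
  have := hpq.ennrealOfReal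
  refine (norm_integral_mul_le_eLpNorm_mul_eLpNorm hh
    (memLp_inv_sub_sub_inv_sub hq1 hq2 a b)).trans_eq ?_
  rw [eLpNorm_inv_sub_sub_inv_sub (by linarith) hab, ENNReal.toReal_mul,
    ENNReal.toReal_ofReal (by positivity)]
  ring

lemma integral_sub_integral_eq_integral_mul_inv_sub_sub_inv_sub {h : ℂ → ℂ} {a b : ℂ}
    (ha : Integrable (fun z : ℂ => h z * (1 / (z - a) - 1 / z)) volume)
    (hb : Integrable (fun z : ℂ => h z * (1 / (z - b) - 1 / z)) volume) :
    (∫ z : ℂ, h z * (1 / (z - a) - 1 / z)) - ∫ z : ℂ, h z * (1 / (z - b) - 1 / z) =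
      ∫ z : ℂ, h z * ((z - a)⁻¹ - (z - b)⁻¹) := by
  rw [← integral_sub ha hb]
  congr 1 with z
  ring

theorem holder_continuity_of_P_operator (p : ℝ) (hp : 2 < p) :
    ∃ K : ℝ, 0 < K ∧ ∀ h : ℂ → ℂ, Measurable h → MemLp h (ENNReal.ofReal p) volume →
      (∀ ζ : ℂ, Integrable (fun z : ℂ => h z * (1 / (z - ζ) - 1 / z)) volume) ∧
      ∀ ζ₁ ζ₂ : ℂ,
        ‖((-(1 / (Real.pi : ℂ)) * ∫ z : ℂ, h z * (1 / (z - ζ₁) - 1 / z)) -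
              (-(1 / (Real.pi : ℂ)) * ∫ z : ℂ, h z * (1 / (z - ζ₂) - 1 / z)))‖ ≤
          K * (eLpNorm h (ENNReal.ofReal p) volume).toReal *
            ‖ζ₁ - ζ₂‖ ^ (1 - 2 / p) := by
  set q := p.conjExponent
  have hpq : p.HolderConjugate q := .conjExponent (by linarith)
  have hq2 : q < 2 := by
    rw [hpq.conjugate_eq, div_lt_iff₀ (by linarith)]
    linarith
  have hexp : 2 / q - 1 = 1 - 2 / p := by
    have := hpq.inv_add_inv_eq_one
    rw [div_eq_mul_inv, div_eq_mul_inv]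
    linarith
  have := hpq.ennrealOfReal
  set C := (eLpNorm (fun w : ℂ => (w - 1)⁻¹ - w⁻¹) (ENNReal.ofReal q) volume).toReal
  refine ⟨C / Real.pi + 1, by positivity, fun h _ hh => ?_⟩
  have hint : ∀ ζ : ℂ, Integrable (fun z : ℂ => h z * (1 / (z - ζ) - 1 / z)) volume := fun ζ => by
    have hmul : MemLp (fun z => h z * ((z - ζ)⁻¹ - (z - 0)⁻¹)) 1 volume :=
      (memLp_inv_sub_sub_inv_sub hpq.symm.lt hq2 ζ 0).mul' hh
    simpa using memLp_one_iff_integrable.mp hmul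
  refine ⟨hint, fun ζ₁ ζ₂ => ?_⟩
  rw [← mul_sub, integral_sub_integral_eq_integral_mul_inv_sub_sub_inv_sub (hint ζ₁) (hint ζ₂),
    norm_mul, norm_neg, norm_div, norm_one, Complex.norm_real, Real.norm_of_nonneg Real.pi_pos.le]
  calc 1 / Real.pi * ‖∫ z : ℂ, h z * ((z - ζ₁)⁻¹ - (z - ζ₂)⁻¹)‖
      ≤ 1 / Real.pi * (C * (eLpNorm h (ENNReal.ofReal p) volume).toReal *
          ‖ζ₁ - ζ₂‖ ^ (2 / q - 1)) := by
        gcongr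
        exact norm_integral_mul_inv_sub_sub_inv_sub_le hpq hq2 hh ζ₁ ζ₂
    _ = C / Real.pi * (eLpNorm h (ENNReal.ofReal p) volume).toReal *
          ‖ζ₁ - ζ₂‖ ^ (1 - 2 / p) := by
        rw [hexp]
        ring
    _ ≤ (C / Real.pi + 1) * (eLpNorm h (ENNReal.ofReal p) volume).toReal *
          ‖ζ₁ - ζ₂‖ ^ (1 - 2 / p) := by
        gcongr
        linarith
end
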